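/- arXiv:2411.01452 — 4 statements merged into one kernel-verified Lean document; each statement's English description precedes it below -/
import Mathlib

section
/- Let G_x be the strand graph of a configuration x of an antiferromagnetic bipartite loop representation. Then every connected component of G_x that is not contained in the interior (i.e. that contains at least one boundary vertex) contains exactly two boundary vertices, and these two boundary vertices (i,s) and (j,s') satisfy exactly one of: (a) s = s' = 0 and i, j lie in opposite parts of the bipartition; (b) s = s' = 2B and i, j lie in opposite parts of the bipartition; (c) {s,s'} = {0, 2B} and i, j lie in the same part of the bipartition. In particular, a component with one endpoint (i,0) with i ∈ 𝒜 has its other endpoint either at (j,0) with j ∈ ℬ or at (j,2B) with j ∈ 𝒜. -/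
open SimpleGraph

variable {V : Type*}

/-- The relation generating the strand graph of a configuration `x` of `n` local
operators (each operator is a finite set of sites: an AFM edge in `E`, an FM edge
in `EF`, or a singleton vertex operator). -/
def strandRel (E EF : Finset (Finset V)) (n : ℕ) (x : Fin n → Finset V)
    (p q : V × Fin (n + 1)) : Prop :=
  ∃ t : Fin n,
    -- temporal edge at a site the operator does not act on
    (p.1 = q.1 ∧ p.1 ∉ x t ∧ p.2 = Fin.castSucc t ∧ q.2 = Fin.succ t) ∨
    -- bridge edges of an antiferromagnetic operator
    (x t ∈ E ∧ p.1 ∈ x t ∧ q.1 ∈ x t ∧ p.1 ≠ q.1 ∧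
      ((p.2 = Fin.castSucc t ∧ q.2 = Fin.castSucc t) ∨
       (p.2 = Fin.succ t ∧ q.2 = Fin.succ t))) ∨
    -- crossing edges of a ferromagnetic operator
    (x t ∈ EF ∧ p.1 ∈ x t ∧ q.1 ∈ x t ∧ p.1 ≠ q.1 ∧
      p.2 = Fin.castSucc t ∧ q.2 = Fin.succ t)

/-- The strand graph of a configuration. -/
def strandGraph (E EF : Finset (Finset V)) (n : ℕ) (x : Fin n → Finset V) :
    SimpleGraph (V × Fin (n + 1)) :=
  SimpleGraph.fromRel (strandRel E EF n x)

/-- `L(x)`: the number of loops (connected components of the strand graph). -/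
noncomputable def numLoops (E EF : Finset (Finset V)) (n : ℕ) (x : Fin n → Finset V) : ℕ :=
  Nat.card (strandGraph E EF n x).ConnectedComponent


namespace BMaux

variable {V : Type*} [DecidableEq V]

/-- The other endpoint of an edge (junk if not applicable). -/
noncomputable def otherF (e : Finset V) (i : V) : V :=
  if h : (e.erase i).Nonempty then h.choose else i

lemma otherF_left {e : Finset V} {a b : V} (hab : a ≠ b) (he : e = {a, b}) :
    otherF e a = b := by
  have hb : b ∈ e.erase a := by
    subst he; simp [Finset.mem_erase, hab.symm]
  have hne : (e.erase a).Nonempty := ⟨b, hb⟩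
  have hspec := hne.choose_spec
  rw [otherF, dif_pos hne]
  rcases Finset.mem_erase.1 hspec with ⟨hna, hmem⟩
  subst he
  rcases Finset.mem_insert.1 hmem with h | h
  · exact absurd h hna
  · exact Finset.mem_singleton.1 h

lemma otherF_right {e : Finset V} {a b : V} (hab : a ≠ b) (he : e = {a, b}) :
    otherF e b = a := by
  refine otherF_left hab.symm ?_
  rw [he, Finset.pair_comm]

section Walk

variable (A : Finset V) (n : ℕ) (x : Fin n → Finset V)

/-- Hypothesis: every operator is an AFM pair. -/
def Good : Prop := ∀ t : Fin n, ∃ a b, a ∈ A ∧ b ∉ A ∧ x t = {a, b}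

abbrev St := V × Fin (n + 1) × Bool

def vtx (s : St (V := V) n) : V × Fin (n + 1) := (s.1, s.2.1)

def flipS (s : St (V := V) n) : St (V := V) n := (s.1, s.2.1, !s.2.2)

def isTerm (s : St (V := V) n) : Prop :=
  (s.2.2 = true ∧ s.2.1 = Fin.last n) ∨ (s.2.2 = false ∧ s.2.1 = 0)

noncomputable def stepF : St (V := V) n → St (V := V) n
  | (i, t, true) =>
    if h : t = Fin.last n then (i, t, true)
    else
      if i ∈ x (t.castPred h) then (otherF (x (t.castPred h)) i, t, false)
      else (i, (t.castPred h).succ, true)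
  | (i, t, false) =>
    if h : t = 0 then (i, t, false)
    else
      if i ∈ x (t.pred h) then (otherF (x (t.pred h)) i, t, true)
      else (i, (t.pred h).castSucc, false)

lemma stepF_true {i : V} {t : Fin (n + 1)} (h : t ≠ Fin.last n) :
    stepF n x (i, t, true) =
      if i ∈ x (t.castPred h) then (otherF (x (t.castPred h)) i, t, false)
      else (i, (t.castPred h).succ, true) := by
  simp [stepF, h]

lemma stepF_false {i : V} {t : Fin (n + 1)} (h : t ≠ 0) :
    stepF n x (i, t, false) =
      if i ∈ x (t.pred h) then (otherF (x (t.pred h)) i, t, true)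
      else (i, (t.pred h).castSucc, false) := by
  simp [stepF, h]

end Walk

end BMaux

namespace BMaux

variable {V : Type*} [DecidableEq V]

section Walk2

variable (A : Finset V) (n : ℕ) (x : Fin n → Finset V)

/-- The parity invariant. -/
def chiF (s : St (V := V) n) : Bool := (decide (s.1 ∈ A)) == s.2.2

lemma mem_pair {e : Finset V} {a b i : V} (he : e = {a, b}) (hi : i ∈ e) :
    i = a ∨ i = b := by
  subst he
  rcases Finset.mem_insert.1 hi with h | h
  · exact Or.inl h
  · exact Or.inr (Finset.mem_singleton.1 h)

lemma chiF_stepF (hg : Good A n x) (s : St (V := V) n) :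
    chiF A n (stepF n x s) = chiF A n s := by
  obtain ⟨i, t, d⟩ := s
  cases d
  · by_cases h : t = 0
    · simp [stepF, h]
    · rw [stepF_false n x h]
      by_cases hm : i ∈ x (t.pred h)
      · rw [if_pos hm]
        obtain ⟨a, b, ha, hb, he⟩ := hg (t.pred h)
        have hab : a ≠ b := fun hh => hb (hh ▸ ha)
        rcases mem_pair he hm with rfl | rfl
        · simp [chiF, otherF_left hab he, ha, hb]
        · simp [chiF, otherF_right hab he, ha, hb]
      · rw [if_neg hm]; simp [chiF]
  · by_cases h : t = Fin.last n
    · simp [stepF, h]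
    · rw [stepF_true n x h]
      by_cases hm : i ∈ x (t.castPred h)
      · rw [if_pos hm]
        obtain ⟨a, b, ha, hb, he⟩ := hg (t.castPred h)
        have hab : a ≠ b := fun hh => hb (hh ▸ ha)
        rcases mem_pair he hm with rfl | rfl
        · simp [chiF, otherF_left hab he, ha, hb]
        · simp [chiF, otherF_right hab he, ha, hb]
      · rw [if_neg hm]; simp [chiF]

lemma stepF_snd_ne_zero {s : St (V := V) n} (hs : ¬ isTerm n s)
    (h : (stepF n x s).2.2 = true) : (stepF n x s).2.1 ≠ 0 := by
  obtain ⟨i, t, d⟩ := s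
  cases d
  · have ht : t ≠ 0 := fun hh => hs (Or.inr ⟨rfl, hh⟩)
    rw [stepF_false n x ht] at h ⊢
    by_cases hm : i ∈ x (t.pred ht)
    · rw [if_pos hm]; simpa using ht
    · rw [if_neg hm] at h; simp at h
  · have ht : t ≠ Fin.last n := fun hh => hs (Or.inl ⟨rfl, hh⟩)
    rw [stepF_true n x ht] at h ⊢
    by_cases hm : i ∈ x (t.castPred ht)
    · rw [if_pos hm] at h; simp at h
    · rw [if_neg hm]; simpa using Fin.succ_ne_zero (t.castPred ht)

lemma stepF_snd_ne_last {s : St (V := V) n} (hs : ¬ isTerm n s)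
    (h : (stepF n x s).2.2 = false) : (stepF n x s).2.1 ≠ Fin.last n := by
  obtain ⟨i, t, d⟩ := s
  cases d
  · have ht : t ≠ 0 := fun hh => hs (Or.inr ⟨rfl, hh⟩)
    rw [stepF_false n x ht] at h ⊢
    by_cases hm : i ∈ x (t.pred ht)
    · rw [if_pos hm] at h; simp at h
    · rw [if_neg hm]; simpa using (Fin.castSucc_lt_last (t.pred ht)).ne
  · have ht : t ≠ Fin.last n := fun hh => hs (Or.inl ⟨rfl, hh⟩)
    rw [stepF_true n x ht] at h ⊢
    by_cases hm : i ∈ x (t.castPred ht)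
    · rw [if_pos hm]; simpa using ht
    · rw [if_neg hm] at h; simp at h

end Walk2

end BMaux

namespace BMaux

variable {V : Type*} [DecidableEq V]

section Walk3

variable (A : Finset V) (n : ℕ) (x : Fin n → Finset V)

lemma stepF_rev (hg : Good A n x) {s : St (V := V) n} (hs : ¬ isTerm n s) :
    ¬ isTerm n (flipS n (stepF n x s)) ∧
      stepF n x (flipS n (stepF n x s)) = flipS n s := by
  obtain ⟨i, t, d⟩ := s
  cases d
  · -- going down, slot t' = t.pred
    have ht : t ≠ 0 := fun hh => hs (Or.inr ⟨rfl, hh⟩)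
    set t' := t.pred ht with ht'
    have hsucc : t'.succ = t := Fin.succ_pred _ _
    rw [stepF_false n x ht]
    by_cases hm : i ∈ x t'
    · rw [if_pos hm]
      obtain ⟨a, b, ha, hb, he⟩ := hg t'
      have hab : a ≠ b := fun hh => hb (hh ▸ ha)
      have hterm : ¬ isTerm n (flipS n (otherF (x t') i, t, true)) := by
        intro hc
        rcases hc with ⟨hc1, hc2⟩ | ⟨hc1, hc2⟩
        · simp [flipS] at hc1
        · exact ht (by simpa [flipS] using hc2)
      refine ⟨hterm, ?_⟩
      show stepF n x (otherF (x t') i, t, false) = (i, t, true)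
      rw [stepF_false n x ht, ← ht']
      rcases mem_pair he hm with rfl | rfl
      · rw [otherF_left hab he, if_pos (by rw [he]; simp),
          otherF_right hab he]
      · rw [otherF_right hab he, if_pos (by rw [he]; simp),
          otherF_left hab he]
    · rw [if_neg hm]
      have hcs : t'.castSucc ≠ Fin.last n := (Fin.castSucc_lt_last _).ne
      have hterm : ¬ isTerm n (flipS n (i, t'.castSucc, false)) := by
        intro hc
        rcases hc with ⟨hc1, hc2⟩ | ⟨hc1, hc2⟩
        · exact hcs (by simpa [flipS] using hc2)
        · simp [flipS] at hc1
      refine ⟨hterm, ?_⟩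
      show stepF n x (i, t'.castSucc, true) = (i, t, true)
      rw [stepF_true n x hcs]
      rw [if_neg (by rwa [Fin.castPred_castSucc])]
      rw [Fin.castPred_castSucc, hsucc]
  · -- going up, slot t' = t.castPred
    have ht : t ≠ Fin.last n := fun hh => hs (Or.inl ⟨rfl, hh⟩)
    set t' := t.castPred ht with ht'
    have hcs : t'.castSucc = t := Fin.castSucc_castPred _ _
    rw [stepF_true n x ht]
    by_cases hm : i ∈ x t'
    · rw [if_pos hm]
      obtain ⟨a, b, ha, hb, he⟩ := hg t'
      have hab : a ≠ b := fun hh => hb (hh ▸ ha)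
      have hterm : ¬ isTerm n (flipS n (otherF (x t') i, t, false)) := by
        intro hc
        rcases hc with ⟨hc1, hc2⟩ | ⟨hc1, hc2⟩
        · exact ht (by simpa [flipS] using hc2)
        · simp [flipS] at hc1
      refine ⟨hterm, ?_⟩
      show stepF n x (otherF (x t') i, t, true) = (i, t, false)
      rw [stepF_true n x ht, ← ht']
      rcases mem_pair he hm with rfl | rfl
      · rw [otherF_left hab he, if_pos (by rw [he]; simp),
          otherF_right hab he]
      · rw [otherF_right hab he, if_pos (by rw [he]; simp),
          otherF_left hab he]
    · rw [if_neg hm]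
      have hsz : t'.succ ≠ (0 : Fin (n+1)) := Fin.succ_ne_zero _
      have hterm : ¬ isTerm n (flipS n (i, t'.succ, true)) := by
        intro hc
        rcases hc with ⟨hc1, hc2⟩ | ⟨hc1, hc2⟩
        · simp [flipS] at hc1
        · exact hsz (by simpa [flipS] using hc2)
      refine ⟨hterm, ?_⟩
      show stepF n x (i, t'.succ, false) = (i, t, false)
      rw [stepF_false n x hsz]
      rw [if_neg (by rwa [Fin.pred_succ])]
      rw [Fin.pred_succ, hcs]

end Walk3

end BMaux

namespace BMaux

variable {V : Type*} [DecidableEq V]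

section Walk4

variable (A : Finset V) (E : Finset (Finset V)) (n : ℕ) (x : Fin n → Finset V)

lemma adj_stepF (hg : Good A n x) (hxE : ∀ t, x t ∈ E)
    {s : St (V := V) n} (hs : ¬ isTerm n s) :
    (strandGraph E ∅ n x).Adj (vtx n s) (vtx n (stepF n x s)) := by
  obtain ⟨i, t, d⟩ := s
  rw [strandGraph, SimpleGraph.fromRel_adj]
  cases d
  · -- going down
    have ht : t ≠ 0 := fun hh => hs (Or.inr ⟨rfl, hh⟩)
    set t' := t.pred ht with ht'
    have hsucc : t'.succ = t := Fin.succ_pred _ _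
    rw [stepF_false n x ht, ← ht']
    by_cases hm : i ∈ x t'
    · rw [if_pos hm]
      obtain ⟨a, b, ha, hb, he⟩ := hg t'
      have hab : a ≠ b := fun hh => hb (hh ▸ ha)
      have hone : otherF (x t') i ≠ i := by
        rcases mem_pair he hm with rfl | rfl
        · rw [otherF_left hab he]; exact hab.symm
        · rw [otherF_right hab he]; exact hab
      have homem : otherF (x t') i ∈ x t' := by
        rcases mem_pair he hm with rfl | rfl
        · rw [otherF_left hab he, he]; simp
        · rw [otherF_right hab he, he]; simp
      constructor
      · intro hc
        exact hone (congrArg Prod.fst hc).symm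
      · left
        exact ⟨t', Or.inr (Or.inl ⟨hxE t', hm, homem, fun hh => hone hh.symm,
          Or.inr ⟨hsucc.symm, hsucc.symm⟩⟩)⟩
    · rw [if_neg hm]
      constructor
      · intro hc
        have := congrArg Prod.snd hc
        simp only [vtx] at this
        rw [← hsucc] at this
        exact (Fin.castSucc_lt_succ : t'.castSucc < t'.succ).ne ((congrArg id this).symm)
      · right
        exact ⟨t', Or.inl ⟨rfl, hm, rfl, hsucc.symm⟩⟩
  · -- going up
    have ht : t ≠ Fin.last n := fun hh => hs (Or.inl ⟨rfl, hh⟩)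
    set t' := t.castPred ht with ht'
    have hcs : t'.castSucc = t := Fin.castSucc_castPred _ _
    rw [stepF_true n x ht, ← ht']
    by_cases hm : i ∈ x t'
    · rw [if_pos hm]
      obtain ⟨a, b, ha, hb, he⟩ := hg t'
      have hab : a ≠ b := fun hh => hb (hh ▸ ha)
      have hone : otherF (x t') i ≠ i := by
        rcases mem_pair he hm with rfl | rfl
        · rw [otherF_left hab he]; exact hab.symm
        · rw [otherF_right hab he]; exact hab
      have homem : otherF (x t') i ∈ x t' := by
        rcases mem_pair he hm with rfl | rfl
        · rw [otherF_left hab he, he]; simp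
        · rw [otherF_right hab he, he]; simp
      constructor
      · intro hc
        exact hone (congrArg Prod.fst hc).symm
      · left
        exact ⟨t', Or.inr (Or.inl ⟨hxE t', hm, homem, fun hh => hone hh.symm,
          Or.inl ⟨hcs.symm, hcs.symm⟩⟩)⟩
    · rw [if_neg hm]
      constructor
      · intro hc
        have := congrArg Prod.snd hc
        simp only [vtx] at this
        rw [← hcs] at this
        exact (Fin.castSucc_lt_succ : t'.castSucc < t'.succ).ne this
      · left
        exact ⟨t', Or.inl ⟨rfl, hm, hcs.symm, rfl⟩⟩

end Walk4

end BMaux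

namespace BMaux

variable {V : Type*} [DecidableEq V]

section Walk5

variable (A : Finset V) (E : Finset (Finset V)) (n : ℕ) (x : Fin n → Finset V)

lemma pair_resolve {e : Finset V} {a b i j : V} (hab : a ≠ b) (he : e = {a, b})
    (hi : i ∈ e) (hj : j ∈ e) (hne : j ≠ i) : j = otherF e i := by
  rcases mem_pair he hi with rfl | rfl
  · rw [otherF_left hab he]
    rcases mem_pair he hj with rfl | rfl
    · exact absurd rfl hne
    · rfl
  · rw [otherF_right hab he]
    rcases mem_pair he hj with rfl | rfl
    · rfl
    · exact absurd rfl hne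

lemma adj_classify (hg : Good A n x) {u q : V × Fin (n + 1)}
    (h : (strandGraph E ∅ n x).Adj u q) :
    ∃ d : Bool, ¬ isTerm n (u.1, u.2, d) ∧ q = vtx n (stepF n x (u.1, u.2, d)) := by
  obtain ⟨u1, u2⟩ := u
  obtain ⟨q1, q2⟩ := q
  rw [strandGraph, SimpleGraph.fromRel_adj] at h
  obtain ⟨hne, hrel⟩ := h
  -- extract a common shape
  have key : (∃ t : Fin n, u1 = q1 ∧ u1 ∉ x t ∧ u2 = Fin.castSucc t ∧ q2 = Fin.succ t) ∨
      (∃ t : Fin n, u1 = q1 ∧ u1 ∉ x t ∧ u2 = Fin.succ t ∧ q2 = Fin.castSucc t) ∨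
      (∃ t : Fin n, u1 ∈ x t ∧ q1 ∈ x t ∧ q1 ≠ u1 ∧
        ((u2 = Fin.castSucc t ∧ q2 = Fin.castSucc t) ∨
         (u2 = Fin.succ t ∧ q2 = Fin.succ t))) := by
    rcases hrel with ⟨t, hc⟩ | ⟨t, hc⟩
    · rcases hc with ⟨h1, h2, h3, h4⟩ | ⟨h1, h2, h3, h4, h5⟩ | ⟨h1, _⟩
      · exact Or.inl ⟨t, h1, h2, h3, h4⟩
      · exact Or.inr (Or.inr ⟨t, h2, h3, fun hh => h4 hh.symm, h5⟩)
      · exact absurd h1 (Finset.notMem_empty _)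
    · rcases hc with ⟨h1, h2, h3, h4⟩ | ⟨h1, h2, h3, h4, h5⟩ | ⟨h1, _⟩
      · have h1' : q1 = u1 := h1
        have h2' : q1 ∉ x t := h2
        exact Or.inr (Or.inl ⟨t, h1'.symm, h1' ▸ h2', h4, h3⟩)
      · refine Or.inr (Or.inr ⟨t, h3, h2, h4, ?_⟩)
        rcases h5 with ⟨ha, hb⟩ | ⟨ha, hb⟩
        · exact Or.inl ⟨hb, ha⟩
        · exact Or.inr ⟨hb, ha⟩
      · exact absurd h1 (Finset.notMem_empty _)
  clear hrel hne
  rcases key with ⟨t, h1, h2, h3, h4⟩ | ⟨t, h1, h2, h3, h4⟩ | ⟨t, hmu, hmq, hqu, hlay⟩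
  · -- temporal, u below q
    subst h1 h3 h4
    refine ⟨true, ?_, ?_⟩
    · rintro (⟨_, hc⟩ | ⟨hc, _⟩)
      · exact (Fin.castSucc_lt_last t).ne (by simpa using hc)
      · simp at hc
    · have hlt : Fin.castSucc t ≠ Fin.last n := (Fin.castSucc_lt_last t).ne
      rw [stepF_true n x hlt]
      rw [if_neg (by rwa [Fin.castPred_castSucc])]
      simp [vtx, Fin.castPred_castSucc]
  · -- temporal, u above q
    subst h1 h3 h4
    refine ⟨false, ?_, ?_⟩
    · rintro (⟨hc, _⟩ | ⟨_, hc⟩)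
      · simp at hc
      · exact Fin.succ_ne_zero t (by simpa using hc)
    · have hnz : Fin.succ t ≠ (0 : Fin (n+1)) := Fin.succ_ne_zero t
      rw [stepF_false n x hnz]
      rw [if_neg (by rwa [Fin.pred_succ])]
      simp [vtx, Fin.pred_succ]
  · -- bridge
    obtain ⟨a, b, ha, hb, he⟩ := hg t
    have hab : a ≠ b := fun hh => hb (hh ▸ ha)
    have hq1 : q1 = otherF (x t) u1 := pair_resolve hab he hmu hmq hqu
    rcases hlay with ⟨hu2, hq2⟩ | ⟨hu2, hq2⟩
    · subst hu2 hq2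
      refine ⟨true, ?_, ?_⟩
      · rintro (⟨_, hc⟩ | ⟨hc, _⟩)
        · exact (Fin.castSucc_lt_last t).ne (by simpa using hc)
        · simp at hc
      · have hlt : Fin.castSucc t ≠ Fin.last n := (Fin.castSucc_lt_last t).ne
        rw [stepF_true n x hlt]
        rw [if_pos (by rwa [Fin.castPred_castSucc])]
        simp [vtx, Fin.castPred_castSucc, hq1]
    · subst hu2 hq2
      refine ⟨false, ?_, ?_⟩
      · rintro (⟨hc, _⟩ | ⟨_, hc⟩)
        · simp at hc
        · exact Fin.succ_ne_zero t (by simpa using hc)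
      · have hnz : Fin.succ t ≠ (0 : Fin (n+1)) := Fin.succ_ne_zero t
        rw [stepF_false n x hnz]
        rw [if_pos (by rwa [Fin.pred_succ])]
        simp [vtx, Fin.pred_succ, hq1]

end Walk5

end BMaux

namespace BMaux

variable {V : Type*} [DecidableEq V]

lemma walk_closed {α : Type*} {G : SimpleGraph α} {S : Set α}
    (hS : ∀ a ∈ S, ∀ b, G.Adj a b → b ∈ S) {u v : α} (w : G.Walk u v) :
    u ∈ S → v ∈ S := by
  induction w with
  | nil => exact id
  | cons h p ih => intro hu; exact ih (hS _ hu _ h)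

section Main

variable (A : Finset V) (E : Finset (Finset V)) (n : ℕ) (x : Fin n → Finset V)

lemma main_aux [Fintype V] (hg : Good A n x) (hxE : ∀ t, x t ∈ E) (hn : 0 < n)
    (s₀ : St (V := V) n)
    (hform : (s₀.2.1 = 0 ∧ s₀.2.2 = true) ∨ (s₀.2.1 = Fin.last n ∧ s₀.2.2 = false)) :
    ∃ w : V × Fin (n + 1),
      (strandGraph E ∅ n x).Reachable (vtx n s₀) w ∧
      vtx n s₀ ≠ w ∧
      (w.2 = 0 ∨ w.2 = Fin.last n) ∧
      (∀ u, (strandGraph E ∅ n x).Reachable (vtx n s₀) u →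
        (u.2 = 0 ∨ u.2 = Fin.last n) → u = vtx n s₀ ∨ u = w) ∧
      (((vtx n s₀).2 = 0 ∧ w.2 = 0 ∧ ¬((vtx n s₀).1 ∈ A ↔ w.1 ∈ A)) ∨
       ((vtx n s₀).2 = Fin.last n ∧ w.2 = Fin.last n ∧ ¬((vtx n s₀).1 ∈ A ↔ w.1 ∈ A)) ∨
       ((((vtx n s₀).2 = 0 ∧ w.2 = Fin.last n) ∨
         ((vtx n s₀).2 = Fin.last n ∧ w.2 = 0)) ∧ ((vtx n s₀).1 ∈ A ↔ w.1 ∈ A))) := by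
  classical
  have h0last : (0 : Fin (n + 1)) ≠ Fin.last n := by
    simp [Fin.ext_iff, Fin.last]; omega
  have hs₀ : ¬ isTerm n s₀ := by
    rcases hform with ⟨h1, h2⟩ | ⟨h1, h2⟩ <;>
      rintro (⟨hc1, hc2⟩ | ⟨hc1, hc2⟩)
    · exact h0last (h1.symm.trans hc2)
    · simp [h2] at hc1
    · simp [h2] at hc1
    · exact h0last (hc2.symm.trans h1)
  have himg : ∀ s : St (V := V) n, ¬ isTerm n s → stepF n x s ≠ s₀ := by
    intro s hs heq
    rcases hform with ⟨h1, h2⟩ | ⟨h1, h2⟩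
    · exact stepF_snd_ne_zero n x hs (heq ▸ h2) (heq ▸ h1)
    · exact stepF_snd_ne_last n x hs (heq ▸ h2) (heq ▸ h1)
  set f : ℕ → St (V := V) n := fun k => (stepF n x)^[k] s₀ with hf
  have hf0 : f 0 = s₀ := rfl
  have hfsucc : ∀ k, f (k + 1) = stepF n x (f k) := by
    intro k; simp [hf, Function.iterate_succ_apply']
  have hchi : ∀ k, chiF A n (f k) = chiF A n s₀ := by
    intro k
    induction k with
    | zero => rfl
    | succ k ih => rw [hfsucc, chiF_stepF A n x hg, ih]
  -- distinctness under no-termination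
  have hdist : ∀ k l, k < l → (∀ j, ¬ isTerm n (f j)) → f k ≠ f l := by
    intro k
    induction k with
    | zero =>
      intro l hl hterm heq
      obtain ⟨l', rfl⟩ : ∃ l', l = l' + 1 := ⟨l - 1, by omega⟩
      rw [hfsucc] at heq
      exact himg (f l') (hterm l') heq.symm
    | succ k ih =>
      intro l hl hterm heq
      obtain ⟨l', rfl⟩ : ∃ l', l = l' + 1 := ⟨l - 1, by omega⟩
      rw [hfsucc, hfsucc] at heq
      have h1 := (stepF_rev A n x hg (hterm k)).2
      have h2 := (stepF_rev A n x hg (hterm l')).2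
      rw [heq] at h1
      have : flipS n (f k) = flipS n (f l') := h1.symm.trans h2
      have hkl : f k = f l' := by
        have := congrArg (flipS n) this
        simpa [flipS] using this
      exact ih l' (by omega) hterm hkl
  have hterm : ∃ m, isTerm n (f m) := by
    by_contra hc
    push_neg at hc
    obtain ⟨a, b, hne, heq⟩ := Finite.exists_ne_map_eq_of_infinite f
    rcases lt_or_gt_of_ne hne with h | h
    · exact hdist a b h hc heq
    · exact hdist b a h hc heq.symm
  set m := Nat.find hterm with hmdef
  have hmterm : isTerm n (f m) := Nat.find_spec hterm
  have hmin : ∀ k, k < m → ¬ isTerm n (f k) := fun k hk => Nat.find_min hterm hk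
  have hreach : ∀ k, k ≤ m → (strandGraph E ∅ n x).Reachable (vtx n s₀) (vtx n (f k)) := by
    intro k
    induction k with
    | zero => intro _; exact SimpleGraph.Reachable.refl _
    | succ k ih =>
      intro hk
      have h1 := ih (by omega)
      have h2 := (adj_stepF A E n x hg hxE (hmin k (by omega))).reachable
      rw [hfsucc]
      exact h1.trans h2
  set S : Set (V × Fin (n + 1)) := {p | ∃ k, k ≤ m ∧ p = vtx n (f k)} with hSdef
  have hclosed : ∀ p ∈ S, ∀ q, (strandGraph E ∅ n x).Adj p q → q ∈ S := by
    rintro p ⟨k, hk, rfl⟩ q hadj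
    obtain ⟨d, hd, hq⟩ := adj_classify A E n x hg hadj
    by_cases hdk : d = (f k).2.2
    · subst hdk
      have hfk : ((vtx n (f k)).1, (vtx n (f k)).2, (f k).2.2) = f k := rfl
      rw [hfk] at hd hq
      rcases eq_or_lt_of_le hk with rfl | hlt
      · exact absurd hmterm hd
      · exact ⟨k + 1, by omega, by rw [hfsucc]; exact hq⟩
    · have hdk' : d = !(f k).2.2 := by
        cases d <;> cases hb : (f k).2.2 <;> simp_all
      have hstate : ((vtx n (f k)).1, (vtx n (f k)).2, d) = flipS n (f k) := by
        rw [hdk']; rfl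
      rw [hstate] at hd hq
      match k, hk with
      | 0, _ =>
        exfalso
        rcases hform with ⟨h1, h2⟩ | ⟨h1, h2⟩
        · exact hd (Or.inr ⟨by simp [flipS, hf0, h2], by simpa [flipS, hf0] using h1⟩)
        · exact hd (Or.inl ⟨by simp [flipS, hf0, h2], by simpa [flipS, hf0] using h1⟩)
      | (j+1), hk =>
        have hj : j < m := by omega
        have hrev := (stepF_rev A n x hg (hmin j hj)).2
        rw [← hfsucc] at hrev
        refine ⟨j, by omega, ?_⟩
        rw [hq, hrev]
        rfl
  have hsub : ∀ u, (strandGraph E ∅ n x).Reachable (vtx n s₀) u → u ∈ S := by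
    intro u hu
    obtain ⟨wk⟩ := hu
    exact walk_closed hclosed wk ⟨0, Nat.zero_le m, rfl⟩
  have hbdk : ∀ k, k ≤ m → ((vtx n (f k)).2 = 0 ∨ (vtx n (f k)).2 = Fin.last n) →
      k = 0 ∨ k = m := by
    intro k hk hb
    by_cases hk0 : k = 0
    · exact Or.inl hk0
    obtain ⟨j, rfl⟩ : ∃ j, k = j + 1 := ⟨k - 1, by omega⟩
    right
    rcases eq_or_lt_of_le hk with h | hlt
    · exact h
    exfalso
    have hj : j < m := by omega
    have hnt := hmin (j + 1) hlt
    cases h2 : (f (j + 1)).2.2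
    · have hne0 : (f (j + 1)).2.1 ≠ 0 := fun hc => hnt (Or.inr ⟨h2, hc⟩)
      have hnl : (f (j + 1)).2.1 ≠ Fin.last n := by
        have := stepF_snd_ne_last n x (hmin j hj) (by rw [← hfsucc]; exact h2)
        rwa [← hfsucc] at this
      rcases hb with hb | hb
      · exact hne0 hb
      · exact hnl hb
    · have hnl : (f (j + 1)).2.1 ≠ Fin.last n := fun hc => hnt (Or.inl ⟨h2, hc⟩)
      have hne0 : (f (j + 1)).2.1 ≠ 0 := by
        have := stepF_snd_ne_zero n x (hmin j hj) (by rw [← hfsucc]; exact h2)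
        rwa [← hfsucc] at this
      rcases hb with hb | hb
      · exact hne0 hb
      · exact hnl hb
  have hchim := hchi m
  have hwb : (vtx n (f m)).2 = 0 ∨ (vtx n (f m)).2 = Fin.last n := by
    rcases hmterm with ⟨g1, g2⟩ | ⟨g1, g2⟩
    · exact Or.inr g2
    · exact Or.inl g2
  have hkey : vtx n s₀ ≠ vtx n (f m) ∧
      (((vtx n s₀).2 = 0 ∧ (vtx n (f m)).2 = 0 ∧
          ¬((vtx n s₀).1 ∈ A ↔ (vtx n (f m)).1 ∈ A)) ∨
       ((vtx n s₀).2 = Fin.last n ∧ (vtx n (f m)).2 = Fin.last n ∧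
          ¬((vtx n s₀).1 ∈ A ↔ (vtx n (f m)).1 ∈ A)) ∨
       ((((vtx n s₀).2 = 0 ∧ (vtx n (f m)).2 = Fin.last n) ∨
         ((vtx n s₀).2 = Fin.last n ∧ (vtx n (f m)).2 = 0)) ∧
          ((vtx n s₀).1 ∈ A ↔ (vtx n (f m)).1 ∈ A))) := by
    rcases hform with ⟨h1, h2⟩ | ⟨h1, h2⟩ <;> rcases hmterm with ⟨g1, g2⟩ | ⟨g1, g2⟩
    · -- start (0, true), end (last, true)
      have hiff : (s₀.1 ∈ A ↔ (f m).1 ∈ A) := by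
        by_cases hiA : s₀.1 ∈ A <;> by_cases hjA : (f m).1 ∈ A <;>
          simp [chiF, h2, g1, hiA, hjA] at hchim ⊢
      refine ⟨?_, Or.inr (Or.inr ⟨Or.inl ⟨h1, g2⟩, hiff⟩)⟩
      intro hc
      have := congrArg Prod.snd hc
      simp only [vtx] at this
      exact h0last ((h1.symm.trans this).trans g2)
    · -- start (0, true), end (0, false)
      have hiff : ¬(s₀.1 ∈ A ↔ (f m).1 ∈ A) := by
        by_cases hiA : s₀.1 ∈ A <;> by_cases hjA : (f m).1 ∈ A <;>
          simp [chiF, h2, g1, hiA, hjA] at hchim ⊢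
      refine ⟨?_, Or.inl ⟨h1, g2, hiff⟩⟩
      intro hc
      have := congrArg Prod.fst hc
      simp only [vtx] at this
      exact hiff (this ▸ Iff.rfl)
    · -- start (last, false), end (last, true)
      have hiff : ¬(s₀.1 ∈ A ↔ (f m).1 ∈ A) := by
        by_cases hiA : s₀.1 ∈ A <;> by_cases hjA : (f m).1 ∈ A <;>
          simp [chiF, h2, g1, hiA, hjA] at hchim ⊢
      refine ⟨?_, Or.inr (Or.inl ⟨h1, g2, hiff⟩)⟩
      intro hc
      have := congrArg Prod.fst hc
      simp only [vtx] at this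
      exact hiff (this ▸ Iff.rfl)
    · -- start (last, false), end (0, false)
      have hiff : (s₀.1 ∈ A ↔ (f m).1 ∈ A) := by
        by_cases hiA : s₀.1 ∈ A <;> by_cases hjA : (f m).1 ∈ A <;>
          simp [chiF, h2, g1, hiA, hjA] at hchim ⊢
      refine ⟨?_, Or.inr (Or.inr ⟨Or.inr ⟨h1, g2⟩, hiff⟩)⟩
      intro hc
      have := congrArg Prod.snd hc
      simp only [vtx] at this
      exact h0last ((g2.symm.trans this.symm).trans h1)
  refine ⟨vtx n (f m), hreach m le_rfl, hkey.1, hwb, ?_, hkey.2⟩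
  intro u hu hub
  obtain ⟨k, hk, rfl⟩ := hsub u hu
  rcases hbdk k hk hub with rfl | rfl
  · exact Or.inl rfl
  · exact Or.inr rfl

end Main

end BMaux

/-- Every connected component of the strand graph of an
antiferromagnetic bipartite loop-representation configuration that contains a
boundary vertex contains exactly two boundary vertices, and they match according
to the bipartite boundary-matching rule. -/
theorem boundary_matching [Fintype V] [DecidableEq V]
    (A : Finset V) (E : Finset (Finset V))
    (hE : ∀ e ∈ E, ∃ i j : V, i ∈ A ∧ j ∉ A ∧ e = {i, j})
    (B : ℕ) (hB : 0 < B)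
    (x : Fin (2 * B) → Finset V) (hx : ∀ t, x t ∈ E)
    (c : (strandGraph E ∅ (2 * B) x).ConnectedComponent)
    (hc : ∃ v ∈ c.supp, v.2 = (0 : Fin (2 * B + 1)) ∨ v.2 = Fin.last (2 * B)) :
    ∃ v w : V × Fin (2 * B + 1),
      v ∈ c.supp ∧ w ∈ c.supp ∧ v ≠ w ∧
      (v.2 = 0 ∨ v.2 = Fin.last (2 * B)) ∧ (w.2 = 0 ∨ w.2 = Fin.last (2 * B)) ∧
      (∀ u ∈ c.supp, (u.2 = 0 ∨ u.2 = Fin.last (2 * B)) → u = v ∨ u = w) ∧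
      ((v.2 = 0 ∧ w.2 = 0 ∧ ¬(v.1 ∈ A ↔ w.1 ∈ A)) ∨
       (v.2 = Fin.last (2 * B) ∧ w.2 = Fin.last (2 * B) ∧ ¬(v.1 ∈ A ↔ w.1 ∈ A)) ∨
       (((v.2 = 0 ∧ w.2 = Fin.last (2 * B)) ∨ (v.2 = Fin.last (2 * B) ∧ w.2 = 0)) ∧
         (v.1 ∈ A ↔ w.1 ∈ A))) := by
  classical
  obtain ⟨v₀, hv₀supp, hv₀b⟩ := hc
  have hv₀c : (strandGraph E ∅ (2 * B) x).connectedComponentMk v₀ = c :=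
    (SimpleGraph.ConnectedComponent.mem_supp_iff c v₀).mp hv₀supp
  have hn : 0 < 2 * B := by omega
  have hg : BMaux.Good A (2 * B) x := by
    intro t
    obtain ⟨a, b, ha, hb, he⟩ := hE (x t) (hx t)
    exact ⟨a, b, ha, hb, he⟩
  have key : ∃ w : V × Fin (2 * B + 1),
      (strandGraph E ∅ (2 * B) x).Reachable v₀ w ∧
      v₀ ≠ w ∧
      (w.2 = 0 ∨ w.2 = Fin.last (2 * B)) ∧
      (∀ u, (strandGraph E ∅ (2 * B) x).Reachable v₀ u →
        (u.2 = 0 ∨ u.2 = Fin.last (2 * B)) → u = v₀ ∨ u = w) ∧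
      ((v₀.2 = 0 ∧ w.2 = 0 ∧ ¬(v₀.1 ∈ A ↔ w.1 ∈ A)) ∨
       (v₀.2 = Fin.last (2 * B) ∧ w.2 = Fin.last (2 * B) ∧ ¬(v₀.1 ∈ A ↔ w.1 ∈ A)) ∨
       (((v₀.2 = 0 ∧ w.2 = Fin.last (2 * B)) ∨
         (v₀.2 = Fin.last (2 * B) ∧ w.2 = 0)) ∧ (v₀.1 ∈ A ↔ w.1 ∈ A))) := by
    rcases hv₀b with h0 | hl
    · exact BMaux.main_aux A E (2 * B) x hg hx hn (v₀.1, v₀.2, true) (Or.inl ⟨h0, rfl⟩)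
    · exact BMaux.main_aux A E (2 * B) x hg hx hn (v₀.1, v₀.2, false) (Or.inr ⟨hl, rfl⟩)
  obtain ⟨w, hreach, hne, hwb, huniq, hpar⟩ := key
  refine ⟨v₀, w, hv₀supp, ?_, hne, hv₀b, hwb, ?_, hpar⟩
  · rw [SimpleGraph.ConnectedComponent.mem_supp_iff]
    exact (SimpleGraph.ConnectedComponent.sound hreach.symm).trans hv₀c
  · intro u husupp hub
    have hru : (strandGraph E ∅ (2 * B) x).Reachable u v₀ :=
      SimpleGraph.ConnectedComponent.eq.mp
        (((SimpleGraph.ConnectedComponent.mem_supp_iff c u).mp husupp).trans hv₀c.symm)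
    exact huniq u hru.symm hub
end

section
/- Suppose |ℬ| ≥ |𝒜|. Then for every configuration x ∈ ℰ^{2B}, at least |ℬ| − |𝒜| distinct connected components of the strand graph G_x contain both a boundary vertex (i,0) with i ∈ ℬ and a boundary vertex (j,2B) with j ∈ ℬ. -/
open SimpleGraph

variable {V : Type*}

namespace CrossingLoops
set_option linter.unusedSectionVars false

variable [DecidableEq V]

/-- An AFM edge: a doubleton with one endpoint in `A` and one outside. -/
def GoodEdge (A : Finset V) (e : Finset V) : Prop := ∃ a b, a ∈ A ∧ b ∉ A ∧ e = {a, b}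

/-- The partner of `i` in the edge `e`. -/
noncomputable def pr (e : Finset V) (i : V) : V :=
  if h : ∃ j ∈ e, j ≠ i then h.choose else i

lemma pr_spec {e : Finset V} {i : V} (h : ∃ j ∈ e, j ≠ i) : pr e i ∈ e ∧ pr e i ≠ i := by
  rw [pr, dif_pos h]
  exact h.choose_spec

lemma mem_ne {A : Finset V} {a b : V} (ha : a ∈ A) (hb : b ∉ A) : a ≠ b := fun h => hb (h ▸ ha)

lemma pr_mem_ne {A e : Finset V} (he : GoodEdge A e) {i : V} (hi : i ∈ e) :
    pr e i ∈ e ∧ pr e i ≠ i := by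
  obtain ⟨a, b, ha, hb, rfl⟩ := he
  have hab : a ≠ b := mem_ne ha hb
  apply pr_spec
  rcases Finset.mem_insert.1 hi with rfl | hi
  · exact ⟨b, by simp, hab.symm⟩
  · rw [Finset.mem_singleton] at hi; subst hi
    exact ⟨a, by simp, hab⟩

lemma eq_pr {A e : Finset V} (he : GoodEdge A e) {i j : V} (hi : i ∈ e) (hj : j ∈ e)
    (hne : j ≠ i) : j = pr e i := by
  obtain ⟨hm, hn⟩ := pr_mem_ne he hi
  obtain ⟨a, b, ha, hb, rfl⟩ := he
  simp only [Finset.mem_insert, Finset.mem_singleton] at hi hj hm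
  rcases hi with rfl | rfl <;> rcases hj with rfl | rfl <;>
    rcases hm with h | h <;> first | rfl | (exfalso; tauto) | (rw [h])

lemma pr_flip {A e : Finset V} (he : GoodEdge A e) {i : V} (hi : i ∈ e) :
    pr e i ∈ A ↔ i ∉ A := by
  obtain ⟨hm, hn⟩ := pr_mem_ne he hi
  obtain ⟨a, b, ha, hb, rfl⟩ := he
  simp only [Finset.mem_insert, Finset.mem_singleton] at hi hm
  rcases hi with rfl | rfl <;> rcases hm with h | h <;> rw [h] <;> tauto

lemma pr_pr {A e : Finset V} (he : GoodEdge A e) {i : V} (hi : i ∈ e) :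
    pr e (pr e i) = i := by
  obtain ⟨hm, hn⟩ := pr_mem_ne he hi
  exact (eq_pr he hm hi (Ne.symm hn)).symm

variable {n : ℕ}

/-- `x` extended to ℕ. -/
def xx (x : Fin n → Finset V) (t : ℕ) : Finset V :=
  if h : t < n then x ⟨t, h⟩ else ∅

lemma xx_eq (x : Fin n → Finset V) {t : ℕ} (h : t < n) : xx x t = x ⟨t, h⟩ := dif_pos h

/-- A walk state is terminal if it has reached a boundary in its travel direction. -/
def Term (n : ℕ) (s : V × ℕ × Bool) : Prop :=
  (s.2.2 = true ∧ s.2.1 = n) ∨ (s.2.2 = false ∧ s.2.1 = 0)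

instance : DecidablePred (Term n (V := V)) := fun s => by unfold Term; infer_instance

/-- One step of the strand-following walk. -/
noncomputable def step (x : Fin n → Finset V) : V × ℕ × Bool → V × ℕ × Bool
  | (i, t, true) => if i ∈ xx x t then (pr (xx x t) i, t, false) else (i, t + 1, true)
  | (i, t, false) => if i ∈ xx x (t - 1) then (pr (xx x (t - 1)) i, t, true) else (i, t - 1, false)

/-- The walk step, fixing terminal states. -/
noncomputable def stepF (x : Fin n → Finset V) (s : V × ℕ × Bool) : V × ℕ × Bool :=
  if Term n s then s else step x s


section Walk

variable (A : Finset V) (x : Fin n → Finset V)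

/-- iterated walk from the left boundary vertex `(j,0)`. -/
noncomputable def it (j : V) (k : ℕ) : V × ℕ × Bool := (stepF x)^[k] (j, 0, true)

lemma it_succ (j : V) (k : ℕ) : it x j (k + 1) = stepF x (it x j k) :=
  Function.iterate_succ_apply' _ _ _

variable {A x}
variable (hg : ∀ t < n, GoodEdge A (xx x t))
include hg

lemma step_valid {s : V × ℕ × Bool} (hv : s.2.1 ≤ n) (ht : ¬ Term n s) :
    (step x s).2.1 ≤ n := by
  obtain ⟨i, t, b⟩ := s
  simp only [Term, not_or, not_and] at ht
  cases b <;> simp only [step] <;> split_ifs <;> simp_all <;> omega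

lemma stepF_valid {s : V × ℕ × Bool} (hv : s.2.1 ≤ n) : (stepF x s).2.1 ≤ n := by
  rw [stepF]; split_ifs with h
  · exact hv
  · exact step_valid hg hv h

lemma it_valid (j : V) (k : ℕ) : (it x j k).2.1 ≤ n := by
  induction k with
  | zero => simp [it]
  | succ k ih => rw [it_succ]; exact stepF_valid hg ih

/-- The conserved invariant: site type matches travel direction. -/
def Good (A : Finset V) (s : V × ℕ × Bool) : Prop := s.1 ∉ A ↔ s.2.2 = true

lemma step_good {s : V × ℕ × Bool} (hv : s.2.1 ≤ n) (ht : ¬ Term n s) (hG : Good A s) :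
    Good A (step x s) := by
  obtain ⟨i, t, b⟩ := s
  have hv : t ≤ n := hv
  simp only [Term, not_or, not_and] at ht
  simp only [Good] at hG ⊢
  cases b <;> simp only [step] <;> split_ifs with h
  · have h1 : t - 1 < n := by simp at ht; omega
    have := pr_flip (hg _ h1) h
    simp_all
  · simp_all
  · have h1 : t < n := by simp at ht; omega
    have := pr_flip (hg _ h1) h
    simp_all
  · simp_all

lemma stepF_good {s : V × ℕ × Bool} (hv : s.2.1 ≤ n) (hG : Good A s) :
    Good A (stepF x s) := by
  rw [stepF]; split_ifs with h
  · exact hG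
  · exact step_good hg hv h hG

lemma it_good {j : V} (hj : j ∉ A) (k : ℕ) : Good A (it x j k) := by
  induction k with
  | zero => simpa [it, Good] using hj
  | succ k ih => rw [it_succ]; exact stepF_good hg (it_valid hg j k) ih

lemma step_ne_start {s : V × ℕ × Bool} (hv : s.2.1 ≤ n) (ht : ¬ Term n s) :
    ¬ ((step x s).2.1 = 0 ∧ (step x s).2.2 = true) := by
  obtain ⟨i, t, b⟩ := s
  simp only [Term, not_or, not_and] at ht
  cases b <;> simp only [step] <;> split_ifs <;> simp_all <;> omega

lemma step_inj {s₁ s₂ : V × ℕ × Bool} (hv₁ : s₁.2.1 ≤ n) (ht₁ : ¬ Term n s₁)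
    (hv₂ : s₂.2.1 ≤ n) (ht₂ : ¬ Term n s₂) (h : step x s₁ = step x s₂) : s₁ = s₂ := by
  obtain ⟨i₁, t₁, b₁⟩ := s₁
  obtain ⟨i₂, t₂, b₂⟩ := s₂
  simp only [Term, not_or, not_and] at ht₁ ht₂
  simp only at hv₁ hv₂
  cases b₁ <;> cases b₂ <;> simp only [step] at h <;> split_ifs at h with h₁ h₂ <;>
    simp only [Prod.mk.injEq] at h ht₁ ht₂ <;> simp_all
  · -- backward bridges at same slot
    obtain ⟨hpr, rfl⟩ := h
    have hlt : t₁ - 1 < n := by omega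
    calc i₁ = pr (xx x (t₁-1)) (pr (xx x (t₁-1)) i₁) := (pr_pr (hg _ hlt) h₁).symm
    _ = pr (xx x (t₁-1)) (pr (xx x (t₁-1)) i₂) := by rw [hpr]
    _ = i₂ := pr_pr (hg _ hlt) h₂
  · omega
  · obtain ⟨hpr, ht⟩ := h
    have hlt : t₂ < n := by omega
    have ht' : t₁ - 1 = t₂ := by omega
    rw [ht'] at hpr
    exact h₂ (hpr ▸ (pr_mem_ne (hg _ hlt) h₁).1)
  · have hlt : t₂ < n := by omega
    exact h₁ (pr_mem_ne (hg _ hlt) ‹i₂ ∈ xx x t₂›).1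
  · obtain ⟨hpr, ht⟩ := h
    have hlt : t₂ - 1 < n := by omega
    rw [show t₁ = t₂ - 1 from ht] at hpr
    exact h₂ (hpr ▸ (pr_mem_ne (hg _ hlt) h₁).1)
  · obtain ⟨hpr, ht⟩ := h
    have hlt : t₁ < n := by omega
    rw [show t₂ - 1 = t₁ by omega] at h₁ ‹i₂ ∈ xx x (t₂-1)›
    exact h₁ (pr_mem_ne (hg _ hlt) ‹i₂ ∈ xx x t₁›).1
  · -- forward bridges at same slot
    obtain ⟨hpr, rfl⟩ := h
    have hlt : t₁ < n := by omega
    calc i₁ = pr (xx x t₁) (pr (xx x t₁) i₁) := (pr_pr (hg _ hlt) h₁).symm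
    _ = pr (xx x t₁) (pr (xx x t₁) i₂) := by rw [hpr]
    _ = i₂ := pr_pr (hg _ hlt) h₂

lemma it_not_start {j j' : V} {k : ℕ} (hk : ∀ m < k, ¬ Term n (it x j m))
    (hk0 : 0 < k) : it x j k ≠ (j', 0, true) := by
  obtain ⟨k, rfl⟩ := Nat.exists_eq_add_of_lt hk0
  rw [zero_add, it_succ, stepF, if_neg (hk k (by omega))]
  intro h
  exact step_ne_start hg (it_valid hg j k) (hk k (by omega)) (by rw [h]; exact ⟨rfl, rfl⟩)

lemma exists_term [Fintype V] (j : V) : ∃ k, Term n (it x j k) := by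
  by_contra hc
  push_neg at hc
  have hinj : Function.Injective (fun k => it x j k) := by
    have key : ∀ a b : ℕ, a < b → it x j a ≠ it x j b := by
      intro a b hab
      induction a generalizing b with
      | zero =>
        intro h
        exact it_not_start hg (fun m _ => hc m) hab h.symm
      | succ a ih =>
        obtain ⟨c, rfl⟩ := Nat.exists_eq_add_of_lt hab
        intro h
        rw [it_succ, it_succ, stepF, stepF, if_neg (hc a), if_neg (hc (a + 1 + c))] at h
        exact ih (a + 1 + c) (by omega)
          (step_inj hg (it_valid hg j a) (hc a) (it_valid hg j _) (hc _) h)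
    intro a b h
    rcases lt_trichotomy a b with hl | hl | hl
    · exact absurd h (key a b hl)
    · exact hl
    · exact absurd h.symm (key b a hl)
  have : Function.Injective (fun k : ℕ =>
      ((it x j k).1, (⟨(it x j k).2.1, Nat.lt_succ_of_le (it_valid hg j k)⟩ : Fin (n+1)),
        (it x j k).2.2)) := by
    intro a b h
    apply hinj
    simp only [Prod.mk.injEq, Fin.mk.injEq] at h
    exact Prod.ext h.1 (Prod.ext h.2.1 h.2.2)
  haveI := Finite.of_injective _ this
  exact not_finite ℕ

/-- number of steps until the walk terminates. -/
noncomputable def K [Fintype V] (j : V) : ℕ := Nat.find (exists_term hg j)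

lemma term_K [Fintype V] (j : V) : Term n (it x j (K hg j)) := Nat.find_spec (exists_term hg j)

lemma not_term_lt [Fintype V] {j : V} {m : ℕ} (hm : m < K hg j) : ¬ Term n (it x j m) :=
  Nat.find_min (exists_term hg j) hm

lemma it_of_le [Fintype V] {j : V} {m : ℕ} (hm : K hg j ≤ m) : it x j m = it x j (K hg j) := by
  obtain ⟨c, rfl⟩ := Nat.exists_eq_add_of_le hm
  induction c with
  | zero => rfl
  | succ c ih => rw [← add_assoc, it_succ, ih (by omega), stepF, if_pos (term_K hg j)]

/-- Two walks that meet must have a common history. -/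
lemma walk_meet {j₁ j₂ : V} : ∀ a b : ℕ, a ≤ b → (∀ k < a, ¬ Term n (it x j₁ k)) →
    (∀ k < b, ¬ Term n (it x j₂ k)) → it x j₁ a = it x j₂ b →
    (j₁, (0 : ℕ), true) = it x j₂ (b - a) := by
  intro a
  induction a with
  | zero => intro b _ _ _ h; simpa [it] using h
  | succ a ih =>
    intro b hab h₁ h₂ h
    obtain ⟨c, rfl⟩ : ∃ c, b = c + 1 := ⟨b - 1, by omega⟩
    rw [it_succ, it_succ, stepF, stepF, if_neg (h₁ a (by omega)), if_neg (h₂ c (by omega))] at h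
    have := step_inj hg (it_valid hg j₁ a) (h₁ a (by omega)) (it_valid hg j₂ c)
      (h₂ c (by omega)) h
    have h' := ih c (by omega) (fun k hk => h₁ k (by omega)) (fun k hk => h₂ k (by omega)) this
    rwa [show c - a = c + 1 - (a + 1) by omega] at h'

lemma start_eq_of_it [Fintype V] {j₁ j₂ : V} {m : ℕ} (hm : m ≤ K hg j₂)
    (h : (j₁, (0 : ℕ), true) = it x j₂ m) : j₁ = j₂ := by
  rcases Nat.eq_zero_or_pos m with rfl | hm0
  · simpa [it] using congrArg (·.1) h
  · exact absurd h.symm (it_not_start hg (fun k hk => not_term_lt hg (by omega)) hm0)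

lemma endpoint_inj [Fintype V] {j₁ j₂ : V}
    (h : it x j₁ (K hg j₁) = it x j₂ (K hg j₂)) : j₁ = j₂ := by
  rcases le_total (K hg j₁) (K hg j₂) with hle | hle
  · exact start_eq_of_it hg (by omega)
      (walk_meet hg _ _ hle (fun k hk => not_term_lt hg hk) (fun k hk => not_term_lt hg hk) h)
  · exact (start_eq_of_it hg (by omega)
      (walk_meet hg _ _ hle (fun k hk => not_term_lt hg hk) (fun k hk => not_term_lt hg hk) h.symm)).symm

section Graph

variable (E : Finset (Finset V))

/-- Projection of a walk state to a vertex of the strand graph. -/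
def toV (s : V × ℕ × Bool) : V × Fin (n + 1) := (s.1, ⟨min s.2.1 n, by omega⟩)

lemma toV_snd {s : V × ℕ × Bool} (h : s.2.1 ≤ n) : ((toV (n := n) s).2 : ℕ) = s.2.1 := by
  simp [toV, Nat.min_eq_left h]

variable {E}

lemma step_adj (hxE : ∀ t, x t ∈ E) {s : V × ℕ × Bool} (hv : s.2.1 ≤ n) (ht : ¬ Term n s) :
    (strandGraph E ∅ n x).Adj (toV s) (toV (step x s)) := by
  obtain ⟨i, t, b⟩ := s
  have hv : t ≤ n := hv
  simp only [Term, not_or, not_and] at ht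
  rw [strandGraph, fromRel_adj]
  cases b <;> simp only [step] <;> split_ifs with h
  · -- backward bridge
    have ht0 : t ≠ 0 := by simp_all
    have hlt : t - 1 < n := by omega
    have hpr := pr_mem_ne (hg _ hlt) h
    constructor
    · intro heq
      exact hpr.2 (congrArg Prod.fst heq).symm
    · refine Or.inl ⟨⟨t - 1, hlt⟩, Or.inr (Or.inl ⟨?_, ?_, ?_, ?_, Or.inr ⟨?_, ?_⟩⟩)⟩
      · exact hxE _
      · rw [← xx_eq x hlt]; exact h
      · rw [← xx_eq x hlt]; exact hpr.1
      · exact fun heq => hpr.2 heq.symm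
      · dsimp only [toV]; simp only [Fin.ext_iff, Fin.succ_mk]; omega
      · dsimp only [toV]; simp only [Fin.ext_iff, Fin.succ_mk]; omega
  · -- backward temporal
    have ht0 : t ≠ 0 := by simp_all
    have hlt : t - 1 < n := by omega
    constructor
    · dsimp only [toV]
      intro heq
      have := congrArg (fun p => ((p.2 : Fin (n+1)) : ℕ)) heq
      simp only at this
      omega
    · refine Or.inr ⟨⟨t - 1, hlt⟩, Or.inl ⟨rfl, ?_, ?_, ?_⟩⟩
      · rw [← xx_eq x hlt]; exact h
      · dsimp only [toV]; simp only [Fin.ext_iff, Fin.castSucc_mk]; omega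
      · dsimp only [toV]; simp only [Fin.ext_iff, Fin.succ_mk]; omega
  · -- forward bridge
    have htn : t ≠ n := by simp_all
    have hlt : t < n := by omega
    have hpr := pr_mem_ne (hg _ hlt) h
    constructor
    · intro heq
      exact hpr.2 (congrArg Prod.fst heq).symm
    · refine Or.inl ⟨⟨t, hlt⟩, Or.inr (Or.inl ⟨?_, ?_, ?_, ?_, Or.inl ⟨?_, ?_⟩⟩)⟩
      · exact hxE _
      · rw [← xx_eq x hlt]; exact h
      · rw [← xx_eq x hlt]; exact hpr.1
      · exact fun heq => hpr.2 heq.symm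
      · dsimp only [toV]; simp only [Fin.ext_iff, Fin.castSucc_mk]; omega
      · dsimp only [toV]; simp only [Fin.ext_iff, Fin.castSucc_mk]; omega
  · -- forward temporal
    have htn : t ≠ n := by simp_all
    have hlt : t < n := by omega
    constructor
    · dsimp only [toV]
      intro heq
      have := congrArg (fun p => ((p.2 : Fin (n+1)) : ℕ)) heq
      simp only at this
      omega
    · refine Or.inl ⟨⟨t, hlt⟩, Or.inl ⟨rfl, ?_, ?_, ?_⟩⟩
      · rw [← xx_eq x hlt]; exact h
      · dsimp only [toV]; simp only [Fin.ext_iff, Fin.castSucc_mk]; omega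
      · dsimp only [toV]; simp only [Fin.ext_iff, Fin.succ_mk]; omega

lemma reach_it (hxE : ∀ t, x t ∈ E) (j : V) (k : ℕ) :
    (strandGraph E ∅ n x).Reachable (toV (n := n) (j, 0, true)) (toV (it x j k)) := by
  induction k with
  | zero => exact Reachable.refl _
  | succ k ih =>
    rw [it_succ, stepF]
    split_ifs with h
    · exact ih
    · exact ih.trans (step_adj hg hxE (it_valid hg j k) h).reachable

/-- Characterization of the neighbors of a vertex in the strand graph. -/
lemma adj_cases (hxE : ∀ t, x t ∈ E) {p q : V × Fin (n + 1)}
    (h : (strandGraph E ∅ n x).Adj p q) :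
    (q.1 = p.1 ∧ (q.2 : ℕ) = (p.2 : ℕ) + 1 ∧ (p.2 : ℕ) < n ∧ p.1 ∉ xx x (p.2 : ℕ)) ∨
    (q.1 = pr (xx x (p.2 : ℕ)) p.1 ∧ (q.2 : ℕ) = (p.2 : ℕ) ∧ (p.2 : ℕ) < n ∧
      p.1 ∈ xx x (p.2 : ℕ)) ∨
    (q.1 = p.1 ∧ (q.2 : ℕ) = (p.2 : ℕ) - 1 ∧ 0 < (p.2 : ℕ) ∧ p.1 ∉ xx x ((p.2 : ℕ) - 1)) ∨
    (q.1 = pr (xx x ((p.2 : ℕ) - 1)) p.1 ∧ (q.2 : ℕ) = (p.2 : ℕ) ∧ 0 < (p.2 : ℕ) ∧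
      p.1 ∈ xx x ((p.2 : ℕ) - 1)) := by
  rw [strandGraph, fromRel_adj] at h
  obtain ⟨hne, h | h⟩ := h <;> obtain ⟨⟨u, hu⟩, h | h | h⟩ := h
  · -- rel p q, temporal
    obtain ⟨h1, h2, h3, h4⟩ := h
    have hp2 : (p.2 : ℕ) = u := by rw [h3]; rfl
    have hq2 : (q.2 : ℕ) = u + 1 := by rw [h4]; rfl
    rw [← xx_eq x hu] at h2
    exact Or.inl ⟨h1.symm, by omega, by omega, by rwa [hp2]⟩
  · -- rel p q, bridge
    obtain ⟨_, hp, hq, hne', hlev | hlev⟩ := h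
    · have hp2 : (p.2 : ℕ) = u := by rw [hlev.1]; rfl
      have hq2 : (q.2 : ℕ) = u := by rw [hlev.2]; rfl
      rw [← xx_eq x hu] at hp hq
      refine Or.inr (Or.inl ⟨?_, by omega, by omega, by rwa [hp2]⟩)
      rw [hp2]
      exact eq_pr (hg _ hu) hp hq (Ne.symm hne')
    · have hp2 : (p.2 : ℕ) = u + 1 := by rw [hlev.1]; rfl
      have hq2 : (q.2 : ℕ) = u + 1 := by rw [hlev.2]; rfl
      rw [← xx_eq x hu] at hp hq
      refine Or.inr (Or.inr (Or.inr ⟨?_, by omega, by omega, ?_⟩))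
      · rw [hp2, Nat.add_sub_cancel]
        exact eq_pr (hg _ hu) hp hq (Ne.symm hne')
      · rw [hp2, Nat.add_sub_cancel]; exact hp
  · exact absurd h.1 (Finset.notMem_empty _)
  · -- rel q p, temporal
    obtain ⟨h1, h2, h3, h4⟩ := h
    have hq2 : (q.2 : ℕ) = u := by rw [h3]; rfl
    have hp2 : (p.2 : ℕ) = u + 1 := by rw [h4]; rfl
    rw [← xx_eq x hu] at h2
    refine Or.inr (Or.inr (Or.inl ⟨h1, by omega, by omega, ?_⟩))
    rw [hp2, Nat.add_sub_cancel, ← h1]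
    exact h2
  · -- rel q p, bridge
    obtain ⟨_, hq, hp, hne', hlev | hlev⟩ := h
    · have hq2 : (q.2 : ℕ) = u := by rw [hlev.1]; rfl
      have hp2 : (p.2 : ℕ) = u := by rw [hlev.2]; rfl
      rw [← xx_eq x hu] at hp hq
      refine Or.inr (Or.inl ⟨?_, by omega, by omega, by rwa [hp2]⟩)
      rw [hp2]
      exact eq_pr (hg _ hu) hp hq hne'
    · have hq2 : (q.2 : ℕ) = u + 1 := by rw [hlev.1]; rfl
      have hp2 : (p.2 : ℕ) = u + 1 := by rw [hlev.2]; rfl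
      rw [← xx_eq x hu] at hp hq
      refine Or.inr (Or.inr (Or.inr ⟨?_, by omega, by omega, ?_⟩))
      · rw [hp2, Nat.add_sub_cancel]
        exact eq_pr (hg _ hu) hp hq hne'
      · rw [hp2, Nat.add_sub_cancel]; exact hp
  · exact absurd h.1 (Finset.notMem_empty _)

omit hg in
lemma toV_eq {q : V × Fin (n + 1)} {s : V × ℕ × Bool} (hs : s.2.1 ≤ n)
    (h1 : q.1 = s.1) (h2 : (q.2 : ℕ) = s.2.1) : q = toV s := by
  rw [Prod.ext_iff]
  refine ⟨h1, Fin.ext ?_⟩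
  dsimp only [toV]
  omega

lemma closure [Fintype V] (hxE : ∀ t, x t ∈ E) {j : V} {k : ℕ} (hk : k ≤ K hg j)
    {q : V × Fin (n + 1)} (h : (strandGraph E ∅ n x).Adj (toV (it x j k)) q) :
    ∃ m, m ≤ K hg j ∧ q = toV (it x j m) := by
  have hv0 := it_valid hg j k
  have hcases := adj_cases hg hxE h
  rcases hS : it x j k with ⟨i, t, d⟩
  rw [hS] at hv0 hcases
  have hv : t ≤ n := hv0
  have hp1 : (toV (n := n) (i, t, d)).1 = i := rfl
  have hp2 : ((toV (n := n) (i, t, d)).2 : ℕ) = t := by dsimp only [toV]; omega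
  rw [hp1, hp2] at hcases
  have fwd : k < K hg j → it x j (k + 1) = step x (i, t, d) := fun hlt => by
    rw [it_succ, stepF, if_neg (not_term_lt hg hlt), hS]
  have bwd : 0 < k → step x (it x j (k - 1)) = (i, t, d) ∧ ¬ Term n (it x j (k - 1)) := by
    intro hk0
    have hnt : ¬ Term n (it x j (k - 1)) := not_term_lt hg (by omega)
    refine ⟨?_, hnt⟩
    rw [← if_neg (c := Term n (it x j (k - 1))) hnt (e := step x (it x j (k - 1))), ← stepF,
      ← it_succ, show k - 1 + 1 = k by omega, hS]
  -- helper for the "next state" subcases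
  have nextK : d = true ∧ t < n ∨ d = false ∧ 0 < t → k < K hg j := by
    rintro hd
    rcases eq_or_lt_of_le hk with rfl | h'
    · have := term_K hg j
      rw [hS] at this
      rcases this with ⟨h1, h2⟩ | ⟨h1, h2⟩ <;> rcases hd with ⟨h3, h4⟩ | ⟨h3, h4⟩ <;>
        simp_all <;> omega
    · exact h'
  cases d
  · -- traveling backward
    rcases hcases with ⟨hq1, hq2, hlt, hmem⟩ | ⟨hq1, hq2, hlt, hmem⟩ |
      ⟨hq1, hq2, h0, hmem⟩ | ⟨hq1, hq2, h0, hmem⟩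
    · -- forward temporal neighbor: previous state
      have hk0 : 0 < k := by
        rcases Nat.eq_zero_or_pos k with rfl | hp
        · exact absurd hS (by intro hh; simpa [it] using congrArg (·.2.2) hh)
        · exact hp
      obtain ⟨heq, hnt⟩ := bwd hk0
      have hv' := it_valid hg j (k - 1)
      rcases hS' : it x j (k - 1) with ⟨i', t', d'⟩
      rw [hS'] at heq hnt hv'
      have hv' : t' ≤ n := hv'
      refine ⟨k - 1, by omega, ?_⟩
      rw [hS']
      cases d' <;> simp only [step] at heq <;> split_ifs at heq with hm <;>
        simp only [Prod.mk.injEq, Bool.true_eq_false, Bool.false_eq_true, and_false, and_true,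
          eq_self_iff_true] at heq
      · -- prev backward temporal
        obtain ⟨hio, hteq⟩ := heq
        have ht'0 : t' ≠ 0 := fun h' => hnt (Or.inr ⟨rfl, h'⟩)
        exact toV_eq hv' (by rw [hq1, hio]) (show (q.2 : ℕ) = t' by omega)
      · -- prev forward bridge : impossible since i ∉ xx x t
        obtain ⟨hpr, hteq⟩ := heq
        subst hteq
        rw [← hpr] at hmem
        exact absurd (pr_mem_ne (hg _ hlt) hm).1 hmem
    · -- forward bridge neighbor: previous state
      have hk0 : 0 < k := by
        rcases Nat.eq_zero_or_pos k with rfl | hp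
        · exact absurd hS (by intro hh; simpa [it] using congrArg (·.2.2) hh)
        · exact hp
      obtain ⟨heq, hnt⟩ := bwd hk0
      have hv' := it_valid hg j (k - 1)
      rcases hS' : it x j (k - 1) with ⟨i', t', d'⟩
      rw [hS'] at heq hnt hv'
      have hv' : t' ≤ n := hv'
      refine ⟨k - 1, by omega, ?_⟩
      rw [hS']
      cases d' <;> simp only [step] at heq <;> split_ifs at heq with hm <;>
        simp only [Prod.mk.injEq, Bool.true_eq_false, Bool.false_eq_true, and_false, and_true,
          eq_self_iff_true] at heq
      · -- prev backward temporal : impossible since i ∈ xx x t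
        obtain ⟨hio, hteq⟩ := heq
        have ht'0 : t' ≠ 0 := fun h' => hnt (Or.inr ⟨rfl, h'⟩)
        subst hio
        rw [show t = t' - 1 by omega] at hmem
        exact absurd hmem hm
      · -- prev forward bridge
        obtain ⟨hpr, hteq⟩ := heq
        subst hteq
        refine toV_eq hv' ?_ (show (q.2 : ℕ) = t' by omega)
        rw [hq1, ← hpr, pr_pr (hg _ hlt) hm]
    · -- backward temporal neighbor: next state
      have hkK := nextK (Or.inr ⟨rfl, h0⟩)
      refine ⟨k + 1, by omega, ?_⟩
      rw [fwd hkK]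
      simp only [step, if_neg hmem]
      exact toV_eq (show t - 1 ≤ n by omega) (by rw [hq1]) (show (q.2 : ℕ) = t - 1 by omega)
    · -- backward bridge neighbor: next state
      have hkK := nextK (Or.inr ⟨rfl, h0⟩)
      refine ⟨k + 1, by omega, ?_⟩
      rw [fwd hkK]
      simp only [step, if_pos hmem]
      exact toV_eq (show t ≤ n by omega) (by rw [hq1]) (show (q.2 : ℕ) = t by omega)
  · -- traveling forward
    rcases hcases with ⟨hq1, hq2, hlt, hmem⟩ | ⟨hq1, hq2, hlt, hmem⟩ |
      ⟨hq1, hq2, h0, hmem⟩ | ⟨hq1, hq2, h0, hmem⟩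
    · -- forward temporal neighbor: next state
      have hkK := nextK (Or.inl ⟨rfl, hlt⟩)
      refine ⟨k + 1, by omega, ?_⟩
      rw [fwd hkK]
      simp only [step, if_neg hmem]
      exact toV_eq (show t + 1 ≤ n by omega) (by rw [hq1]) (show (q.2 : ℕ) = t + 1 by omega)
    · -- forward bridge neighbor: next state
      have hkK := nextK (Or.inl ⟨rfl, hlt⟩)
      refine ⟨k + 1, by omega, ?_⟩
      rw [fwd hkK]
      simp only [step, if_pos hmem]
      exact toV_eq (show t ≤ n by omega) (by rw [hq1]) (show (q.2 : ℕ) = t by omega)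
    · -- backward temporal neighbor: previous state
      have hk0 : 0 < k := by
        rcases Nat.eq_zero_or_pos k with rfl | hp
        · have : t = 0 := by simpa [it] using congrArg (·.2.1) hS.symm
          omega
        · exact hp
      obtain ⟨heq, hnt⟩ := bwd hk0
      have hv' := it_valid hg j (k - 1)
      rcases hS' : it x j (k - 1) with ⟨i', t', d'⟩
      rw [hS'] at heq hnt hv'
      have hv' : t' ≤ n := hv'
      refine ⟨k - 1, by omega, ?_⟩
      rw [hS']
      cases d' <;> simp only [step] at heq <;> split_ifs at heq with hm <;>
        simp only [Prod.mk.injEq, Bool.true_eq_false, Bool.false_eq_true, and_false, and_true,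
          eq_self_iff_true] at heq
      · -- prev backward bridge : impossible since i ∉ xx x (t - 1)
        obtain ⟨hpr, hteq⟩ := heq
        have ht'0 : t' ≠ 0 := fun h' => hnt (Or.inr ⟨rfl, h'⟩)
        subst hteq
        have h1 : t' - 1 < n := by omega
        rw [← hpr] at hmem
        exact absurd (pr_mem_ne (hg _ h1) hm).1 hmem
      · -- prev forward temporal
        obtain ⟨hio, hteq⟩ := heq
        exact toV_eq hv' (by rw [hq1, hio]) (show (q.2 : ℕ) = t' by omega)
    · -- backward bridge neighbor: previous state
      have hk0 : 0 < k := by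
        rcases Nat.eq_zero_or_pos k with rfl | hp
        · have : t = 0 := by simpa [it] using congrArg (·.2.1) hS.symm
          omega
        · exact hp
      obtain ⟨heq, hnt⟩ := bwd hk0
      have hv' := it_valid hg j (k - 1)
      rcases hS' : it x j (k - 1) with ⟨i', t', d'⟩
      rw [hS'] at heq hnt hv'
      have hv' : t' ≤ n := hv'
      refine ⟨k - 1, by omega, ?_⟩
      rw [hS']
      cases d' <;> simp only [step] at heq <;> split_ifs at heq with hm <;>
        simp only [Prod.mk.injEq, Bool.true_eq_false, Bool.false_eq_true, and_false, and_true,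
          eq_self_iff_true] at heq
      · -- prev backward bridge
        obtain ⟨hpr, hteq⟩ := heq
        have ht'0 : t' ≠ 0 := fun h' => hnt (Or.inr ⟨rfl, h'⟩)
        subst hteq
        have h1 : t' - 1 < n := by omega
        refine toV_eq hv' ?_ (show (q.2 : ℕ) = t' by omega)
        rw [hq1, ← hpr, pr_pr (hg _ h1) hm]
      · -- prev forward temporal : impossible since i ∈ xx x (t - 1)
        obtain ⟨hio, hteq⟩ := heq
        subst hio
        rw [show t - 1 = t' by omega] at hmem
        exact absurd hmem hm

/-- Every vertex reachable from the start of a walk lies on the walk. -/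
lemma reach_to_it [Fintype V] (hxE : ∀ t, x t ∈ E) {j : V} {v : V × Fin (n + 1)}
    (h : (strandGraph E ∅ n x).Reachable (toV (n := n) (j, 0, true)) v) :
    ∃ m, m ≤ K hg j ∧ v = toV (it x j m) := by
  obtain ⟨w⟩ := h
  suffices H : ∀ (u v : V × Fin (n + 1)) (_ : (strandGraph E ∅ n x).Walk u v),
      (∃ m, m ≤ K hg j ∧ u = toV (it x j m)) → ∃ m, m ≤ K hg j ∧ v = toV (it x j m) by
    exact H _ _ w ⟨0, Nat.zero_le _, by simp [it]⟩
  intro u v w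
  induction w with
  | nil => exact id
  | cons hadj w ih =>
    rintro ⟨m, hm, rfl⟩
    exact ih (closure hg hxE hm hadj)

end Graph
end Walk
end CrossingLoops

/-- If `|ℬ| ≥ |𝒜|`, then at least `|ℬ| − |𝒜|` distinct connected
components of the strand graph contain both a left-boundary vertex `(i,0)` with
`i ∈ ℬ` and a right-boundary vertex `(j,2B)` with `j ∈ ℬ`. -/
theorem crossing_loops [Fintype V] [DecidableEq V]
    (A : Finset V) (E : Finset (Finset V))
    (hE : ∀ e ∈ E, ∃ i j : V, i ∈ A ∧ j ∉ A ∧ e = {i, j})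
    (hAB : A.card ≤ Aᶜ.card)
    (B : ℕ) (hB : 0 < B)
    (x : Fin (2 * B) → Finset V) (hx : ∀ t, x t ∈ E) :
    ∃ S : Finset ((strandGraph E ∅ (2 * B) x).ConnectedComponent),
      Aᶜ.card - A.card ≤ S.card ∧
      ∀ c ∈ S, (∃ i : V, i ∉ A ∧ (i, (0 : Fin (2 * B + 1))) ∈ c.supp) ∧
        (∃ j : V, j ∉ A ∧ (j, Fin.last (2 * B)) ∈ c.supp) := by
  classical
  open CrossingLoops in
  have hg : ∀ t < 2 * B, GoodEdge A (xx x t) := by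
    intro t ht
    rw [xx_eq x ht]
    exact hE _ (hx _)
  set G := strandGraph E ∅ (2 * B) x with hG
  set ep : V → V × ℕ × Bool := fun j => it x j (K hg j) with hep
  have hterm : ∀ j, Term (2 * B) (ep j) := fun j => term_K hg j
  have hgood : ∀ j ∉ A, Good A (ep j) := fun j hj => it_good hg hj _
  have hepinj : ∀ j₁ j₂, ep j₁ = ep j₂ → j₁ = j₂ := fun _ _ h => endpoint_inj hg h
  set T : Finset V := Aᶜ.filter (fun j => (ep j).2.2 = true) with hT
  have hAT : ∀ j ∈ T, j ∉ A := by
    intro j hj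
    rw [hT, Finset.mem_filter, Finset.mem_compl] at hj
    exact hj.1
  have hdirT : ∀ j ∈ T, (ep j).2.2 = true := by
    intro j hj
    rw [hT, Finset.mem_filter] at hj
    exact hj.2
  have hsplit : T.card + (Aᶜ.filter (fun j => ¬((ep j).2.2 = true))).card = Aᶜ.card :=
    Finset.card_filter_add_card_filter_not _
  have hU : (Aᶜ.filter (fun j => ¬((ep j).2.2 = true))).card ≤ A.card := by
    apply Finset.card_le_card_of_injOn (fun j => (ep j).1)
    · intro j hj
      simp only [Finset.mem_coe, Finset.mem_filter, Finset.mem_compl] at hj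
      by_contra hc
      exact hj.2 ((hgood j hj.1).mp hc)
    · intro j₁ h₁ j₂ h₂ hfst
      simp only [Finset.coe_filter, Set.mem_setOf_eq, Finset.mem_compl] at h₁ h₂
      apply hepinj
      rcases hterm j₁ with ⟨hd₁, -⟩ | ⟨hd₁, ht₁⟩
      · exact absurd hd₁ h₁.2
      rcases hterm j₂ with ⟨hd₂, -⟩ | ⟨hd₂, ht₂⟩
      · exact absurd hd₂ h₂.2
      rw [Prod.ext_iff, Prod.ext_iff]
      exact ⟨hfst, ⟨by rw [ht₁, ht₂], by rw [hd₁, hd₂]⟩⟩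
  have hTcard : Aᶜ.card - A.card ≤ T.card := by omega
  have htov : ∀ j : V, (toV (n := 2 * B) (j, 0, true)) = (j, (0 : Fin (2 * B + 1))) := by
    intro j
    rw [Prod.ext_iff]
    exact ⟨rfl, Fin.ext (by simp [toV])⟩
  refine ⟨T.image (fun j => G.connectedComponentMk (j, (0 : Fin (2 * B + 1)))), ?_, ?_⟩
  · refine le_trans hTcard (le_of_eq (Finset.card_image_of_injOn ?_).symm)
    intro j₁ h₁ j₂ h₂ hc
    have hr : G.Reachable (j₁, (0 : Fin (2 * B + 1))) (j₂, (0 : Fin (2 * B + 1))) :=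
      (SimpleGraph.ConnectedComponent.eq).1 hc
    rw [← htov j₁, ← htov j₂] at hr
    obtain ⟨m, hm, hv⟩ := reach_to_it hg hx hr
    have hvld := it_valid hg j₁ m
    rcases hS : it x j₁ m with ⟨i, t, d⟩
    rw [hS] at hv hvld
    have hvld : t ≤ 2 * B := hvld
    have h1 : j₂ = i := congrArg Prod.fst hv
    have h2 : t = 0 := by
      have h2 := congrArg (fun p => ((p.2 : Fin (2 * B + 1)) : ℕ)) hv
      dsimp only [toV] at h2
      omega
    subst h2
    cases d
    · -- the walk hits a terminal state before its end: impossible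
      exfalso
      have hterm' : Term (2 * B) (i, 0, false) := Or.inr ⟨rfl, rfl⟩
      rcases eq_or_lt_of_le hm with rfl | hmK
      · have hd := hdirT j₁ (Finset.mem_coe.1 h₁)
        rw [hep] at hd
        simp only at hd
        rw [hS] at hd
        exact absurd hd (by simp)
      · exact not_term_lt hg hmK (hS ▸ hterm')
    · subst h1
      exact (start_eq_of_it hg hm hS.symm).symm
  · intro c hc
    obtain ⟨j, hjT, rfl⟩ := Finset.mem_image.1 hc
    have hjA := hAT j hjT
    have hjdir := hdirT j hjT
    constructor
    · exact ⟨j, hjA, by rw [SimpleGraph.ConnectedComponent.mem_supp_iff]⟩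
    · refine ⟨(ep j).1, ?_, ?_⟩
      · exact (hgood j hjA).mpr hjdir
      · rw [SimpleGraph.ConnectedComponent.mem_supp_iff]
        have hreach := reach_it hg hx j (K hg j)
        have htn : (ep j).2.1 = 2 * B := by
          rcases hterm j with ⟨-, h'⟩ | ⟨h', -⟩
          · exact h'
          · rw [h'] at hjdir; exact absurd hjdir (by simp)
        have hend : toV (n := 2 * B) (ep j) = ((ep j).1, Fin.last (2 * B)) := by
          rw [Prod.ext_iff]
          refine ⟨rfl, Fin.ext ?_⟩
          dsimp only [toV]
          rw [htn]
          simp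
        rw [← hend]
        rw [htov j] at hreach
        exact (SimpleGraph.ConnectedComponent.sound hreach.symm)
end

section
/- Suppose 1 ≤ |𝒜| ≤ |ℬ|. For a configuration x ∈ ℰ^{2B} and a cut level t ∈ {0,1,…,2B}, let c_t(x) be the number of connected components of the strand graph G_x that contain at least one vertex of the form (i,t) with i ∈ 𝒱 (the loops passing through the cut at level t). Then for any two configurations x, x' ∈ ℰ^{2B} and any two cut levels t, t' ∈ {0,…,2B}, we have |c_t(x) − c_{t'}(x')| ≤ 2|𝒜| − 1. -/
set_option linter.unusedSectionVars false

open SimpleGraph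

variable {V : Type*}

/-- The number of loops (connected components of the strand graph) passing through
the cut at time level `t`. -/
noncomputable def cutCount (E EF : Finset (Finset V)) (n : ℕ) (x : Fin n → Finset V)
    (t : Fin (n + 1)) : ℕ :=
  Set.ncard {c : (strandGraph E EF n x).ConnectedComponent | ∃ i : V, (i, t) ∈ c.supp}

/-! ### Auxiliary machinery: iterating a partial injection -/

section Iter

variable {P : Type*}

private def FFb (f : P → Option P) : Option P → Option P := fun o => o.bind f

private lemma FFb_none (f : P → Option P) : FFb f none = none := rfl

private lemma FFb_some (f : P → Option P) (u : P) : FFb f (some u) = f u := rfl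

private lemma iter_none (f : P → Option P) (k : ℕ) : (FFb f)^[k] none = none := by
  induction k with
  | zero => rfl
  | succ m ih => rw [Function.iterate_succ_apply, FFb_none, ih]

private lemma iter_some (f : P → Option P) (k : ℕ) {o : Option P} {z : P}
    (h : (FFb f)^[k] o = some z) : ∃ u, o = some u := by
  cases o with
  | none => rw [iter_none] at h; exact absurd h (by simp)
  | some u => exact ⟨u, rfl⟩

private lemma iter_defined (f : P → Option P) {j k : ℕ} (hjk : j ≤ k) {o : Option P} {z : P}
    (h : (FFb f)^[k] o = some z) : ∃ w, (FFb f)^[j] o = some w := by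
  have hk : k = (k - j) + j := by omega
  rw [hk, Function.iterate_add_apply] at h
  exact iter_some f _ h

private lemma iter_inj (f : P → Option P)
    (hf : ∀ u v w : P, f u = some w → f v = some w → u = v)
    (k : ℕ) : ∀ {o₁ o₂ : Option P} {z : P},
    (FFb f)^[k] o₁ = some z → (FFb f)^[k] o₂ = some z → o₁ = o₂ := by
  induction k with
  | zero => intro o₁ o₂ z h1 h2; simp only [Function.iterate_zero_apply] at h1 h2
            rw [h1, h2]
  | succ m ih =>
    intro o₁ o₂ z h1 h2
    rw [Function.iterate_succ_apply] at h1 h2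
    have h12 : FFb f o₁ = FFb f o₂ := ih h1 h2
    obtain ⟨w, hw⟩ := iter_some f m h1
    obtain ⟨u₁, hu₁⟩ := iter_some f 1 (by rw [Function.iterate_one]; exact hw)
    have hw2 : FFb f o₂ = some w := h12 ▸ hw
    obtain ⟨u₂, hu₂⟩ := iter_some f 1 (by rw [Function.iterate_one]; exact hw2)
    subst hu₁; subst hu₂
    rw [FFb_some] at hw hw2
    exact congrArg some (hf u₁ u₂ w hw hw2)

private lemma reach_comparable (G : SimpleGraph P) (f : P → Option P)
    (hf : ∀ u v w : P, f u = some w → f v = some w → u = v)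
    (hadj : ∀ p q : P, G.Adj p q → f p = some q ∨ f q = some p)
    {p q : P} (h : G.Reachable p q) :
    ∃ k, (FFb f)^[k] (some p) = some q ∨ (FFb f)^[k] (some q) = some p := by
  rw [SimpleGraph.reachable_iff_reflTransGen] at h
  induction h with
  | refl => exact ⟨0, Or.inl rfl⟩
  | @tail c d hpc hcd ih =>
    obtain ⟨k, hk | hk⟩ := ih
    · rcases hadj c d hcd with hstep | hstep
      · exact ⟨k + 1, Or.inl (by
          rw [Function.iterate_succ_apply', hk, FFb_some, hstep])⟩
      · rcases Nat.eq_zero_or_pos k with rfl | hkpos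
        · simp only [Function.iterate_zero_apply, Option.some_inj] at hk
          subst hk
          exact ⟨1, Or.inr (by rw [Function.iterate_one, FFb_some, hstep])⟩
        · obtain ⟨m, rfl⟩ : ∃ m, k = m + 1 := ⟨k - 1, by omega⟩
          rw [Function.iterate_succ_apply'] at hk
          obtain ⟨w, hw⟩ := iter_some f 1
            (by rw [Function.iterate_one]; exact hk)
          rw [hw, FFb_some] at hk
          have : w = d := hf w d c hk hstep
          subst this
          exact ⟨m, Or.inl hw⟩
    · rcases hadj c d hcd with hstep | hstep
      · rcases Nat.eq_zero_or_pos k with rfl | hkpos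
        · simp only [Function.iterate_zero_apply, Option.some_inj] at hk
          subst hk
          exact ⟨1, Or.inl (by rw [Function.iterate_one, FFb_some, hstep])⟩
        · obtain ⟨m, rfl⟩ : ∃ m, k = m + 1 := ⟨k - 1, by omega⟩
          rw [Function.iterate_succ_apply] at hk
          rw [FFb_some, hstep] at hk
          exact ⟨m, Or.inr hk⟩
      · exact ⟨k + 1, Or.inr (by
          rw [Function.iterate_succ_apply, FFb_some, hstep, hk])⟩

end Iter

/-! ### The canonical orientation of a bipartite AFM strand graph -/

section CutBounds

variable [Fintype V] [DecidableEq V]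

/-- Forward step of the canonical orientation of a strand graph: sites in `A` flow
up in time, sites outside `A` flow down, bridges turn the flow around. -/
private def stepF (A : Finset V) {n : ℕ} (x : Fin n → Finset V) (a b : Fin n → V) :
    V × Fin (n + 1) → Option (V × Fin (n + 1)) := fun p =>
  if p.1 ∈ A then
    if h : (p.2 : ℕ) < n then
      if p.1 ∈ x ⟨p.2, h⟩ then some (b ⟨p.2, h⟩, p.2)
      else some (p.1, Fin.succ ⟨p.2, h⟩)
    else none
  else
    if h : 0 < (p.2 : ℕ) then
      if p.1 ∈ x ⟨(p.2 : ℕ) - 1, by have := p.2.isLt; omega⟩ then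
        some (a ⟨(p.2 : ℕ) - 1, by have := p.2.isLt; omega⟩, p.2)
      else some (p.1, Fin.castSucc ⟨(p.2 : ℕ) - 1, by have := p.2.isLt; omega⟩)
    else none

/-- Backward step (the inverse partial map). -/
private def backF (A : Finset V) {n : ℕ} (x : Fin n → Finset V) (a b : Fin n → V) :
    V × Fin (n + 1) → Option (V × Fin (n + 1)) := fun q =>
  if q.1 ∈ A then
    if h : 0 < (q.2 : ℕ) then
      if q.1 ∈ x ⟨(q.2 : ℕ) - 1, by have := q.2.isLt; omega⟩ then
        some (b ⟨(q.2 : ℕ) - 1, by have := q.2.isLt; omega⟩, q.2)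
      else some (q.1, Fin.castSucc ⟨(q.2 : ℕ) - 1, by have := q.2.isLt; omega⟩)
    else none
  else
    if h : (q.2 : ℕ) < n then
      if q.1 ∈ x ⟨q.2, h⟩ then some (a ⟨q.2, h⟩, q.2)
      else some (q.1, Fin.succ ⟨q.2, h⟩)
    else none

variable {A : Finset V} {E : Finset (Finset V)} {n : ℕ} {x : Fin n → Finset V}
  {a b : Fin n → V}

private lemma mem_x_iff (hx2 : ∀ s, x s = {a s, b s}) (s : Fin n) (v : V) :
    v ∈ x s ↔ v = a s ∨ v = b s := by
  rw [hx2 s]; simp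

private lemma back_of_step (ha : ∀ s, a s ∈ A) (hb : ∀ s, b s ∉ A)
    (hx2 : ∀ s, x s = {a s, b s}) {p q : V × Fin (n + 1)}
    (hstep : stepF A x a b p = some q) : backF A x a b q = some p := by
  obtain ⟨v, l⟩ := p
  unfold stepF at hstep
  simp only at hstep
  split_ifs at hstep with hvA hlt hmx hpos hmx'
  · injection hstep with h; subst h
    have hva : v = a ⟨(l : ℕ), hlt⟩ := by
      rcases (mem_x_iff hx2 _ v).mp hmx with h | h
      · exact h
      · exact absurd (h ▸ hvA) (hb _)
    unfold backF
    simp only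
    rw [if_neg (hb _), dif_pos hlt]
    rw [if_pos ((mem_x_iff hx2 _ _).mpr (Or.inr rfl))]
    rw [hva]
  · injection hstep with h; subst h
    unfold backF
    simp only
    rw [if_pos hvA]
    have h1 : (0 : ℕ) < ((Fin.succ ⟨(l : ℕ), hlt⟩ : Fin (n+1)) : ℕ) := by
      simp [Fin.val_succ]
    rw [dif_pos h1]
    have h2 : (⟨((Fin.succ ⟨(l : ℕ), hlt⟩ : Fin (n+1)) : ℕ) - 1, by omega⟩ : Fin n)
        = ⟨(l : ℕ), hlt⟩ := by
      simp [Fin.val_succ]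
    rw [h2, if_neg hmx]
    have : (Fin.castSucc ⟨(l : ℕ), hlt⟩ : Fin (n+1)) = l := by
      simp [Fin.ext_iff]
    rw [this]
  · injection hstep with h; subst h
    have hvb : v = b ⟨(l : ℕ) - 1, by have := l.isLt; omega⟩ := by
      rcases (mem_x_iff hx2 _ v).mp hmx' with h | h
      · exact absurd (h ▸ ha _) hvA
      · exact h
    unfold backF
    simp only
    rw [if_pos (ha _), dif_pos hpos]
    rw [if_pos ((mem_x_iff hx2 _ _).mpr (Or.inl rfl))]
    rw [hvb]
  · injection hstep with h; subst h
    unfold backF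
    simp only
    rw [if_neg hvA]
    have hl := l.isLt
    have h1 : ((Fin.castSucc ⟨(l : ℕ) - 1, by omega⟩ : Fin (n+1)) : ℕ) < n := by
      simp [Fin.coe_castSucc]; omega
    rw [dif_pos h1]
    have h2 : (⟨((Fin.castSucc ⟨(l : ℕ) - 1, by omega⟩ : Fin (n+1)) : ℕ), h1⟩ : Fin n)
        = ⟨(l : ℕ) - 1, by omega⟩ := by
      simp [Fin.ext_iff]
    rw [h2, if_neg hmx']
    have h3 : (Fin.succ ⟨(l : ℕ) - 1, by omega⟩ : Fin (n+1)) = l := by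
      simp [Fin.ext_iff]; omega
    rw [h3]

private lemma step_adj (ha : ∀ s, a s ∈ A) (hb : ∀ s, b s ∉ A)
    (hx2 : ∀ s, x s = {a s, b s}) (hxE : ∀ s, x s ∈ E)
    {p q : V × Fin (n + 1)} (hstep : stepF A x a b p = some q) :
    (strandGraph E ∅ n x).Adj p q := by
  obtain ⟨v, l⟩ := p
  unfold stepF at hstep
  simp only at hstep
  rw [strandGraph, SimpleGraph.fromRel_adj]
  split_ifs at hstep with hvA hlt hmx hpos hmx'
  · injection hstep with h; subst h
    set s : Fin n := ⟨(l : ℕ), hlt⟩ with hs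
    have hva : v = a s := by
      rcases (mem_x_iff hx2 s v).mp hmx with h | h
      · exact h
      · exact absurd (h ▸ hvA) (hb s)
    have hne : v ≠ b s := fun h => (hb s) (h ▸ hvA)
    refine ⟨by simp [Prod.ext_iff, hne], Or.inl ⟨s, Or.inr (Or.inl ?_)⟩⟩
    refine ⟨hxE s, hmx, (mem_x_iff hx2 s _).mpr (Or.inr rfl), hne, Or.inl ⟨?_, ?_⟩⟩
    · simp [Fin.ext_iff, hs]
    · simp [Fin.ext_iff, hs]
  · injection hstep with h; subst h
    refine ⟨by simp [Prod.ext_iff, Fin.ext_iff], Or.inl ⟨⟨(l : ℕ), hlt⟩, Or.inl ?_⟩⟩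
    exact ⟨rfl, hmx, by simp [Fin.ext_iff], rfl⟩
  · injection hstep with h; subst h
    set s : Fin n := ⟨(l : ℕ) - 1, by have := l.isLt; omega⟩ with hs
    have hvb : v = b s := by
      rcases (mem_x_iff hx2 s v).mp hmx' with h | h
      · exact absurd (h ▸ ha s) hvA
      · exact h
    have hne : v ≠ a s := fun h => hvA (h ▸ ha s)
    refine ⟨by simp [Prod.ext_iff, hne], Or.inl ⟨s, Or.inr (Or.inl ?_)⟩⟩
    refine ⟨hxE s, hmx', (mem_x_iff hx2 s _).mpr (Or.inl rfl), hne, Or.inr ⟨?_, ?_⟩⟩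
    · simp [Fin.ext_iff, hs]; omega
    · simp [Fin.ext_iff, hs]; omega
  · injection hstep with h; subst h
    set s : Fin n := ⟨(l : ℕ) - 1, by have := l.isLt; omega⟩ with hs
    refine ⟨by simp [Prod.ext_iff, Fin.ext_iff, hs]; omega, Or.inr ⟨s, Or.inl ?_⟩⟩
    exact ⟨rfl, hmx', by simp [Fin.ext_iff], by simp [Fin.ext_iff, hs]; omega⟩

private lemma adj_step (ha : ∀ s, a s ∈ A) (hb : ∀ s, b s ∉ A)
    (hx2 : ∀ s, x s = {a s, b s})
    {p q : V × Fin (n + 1)} (hadj : (strandGraph E ∅ n x).Adj p q) :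
    stepF A x a b p = some q ∨ stepF A x a b q = some p := by
  rw [strandGraph, SimpleGraph.fromRel_adj] at hadj
  obtain ⟨hne, hrel⟩ := hadj
  suffices H : ∀ p q : V × Fin (n + 1), p ≠ q → strandRel E ∅ n x p q →
      stepF A x a b p = some q ∨ stepF A x a b q = some p by
    rcases hrel with h | h
    · exact H p q hne h
    · exact (H q p hne.symm h).symm
  clear hne hrel p q
  rintro ⟨pv, pl⟩ ⟨qv, ql⟩ hne ⟨s, hrel⟩
  rcases hrel with ⟨h1, h2, h3, h4⟩ | ⟨hEx, h1, h2, h3, h5⟩ | ⟨hEF, _⟩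
  · simp only at h1 h2 h3 h4
    subst h1; subst h3; subst h4
    by_cases hvA : pv ∈ A
    · left
      unfold stepF
      simp only
      rw [if_pos hvA]
      have hlt : ((Fin.castSucc s : Fin (n+1)) : ℕ) < n := by simp [s.isLt]
      rw [dif_pos hlt]
      have hss : (⟨((Fin.castSucc s : Fin (n+1)) : ℕ), hlt⟩ : Fin n) = s := by
        simp [Fin.ext_iff]
      rw [hss, if_neg h2]
    · right
      unfold stepF
      simp only
      rw [if_neg hvA]
      have hpos : 0 < ((Fin.succ s : Fin (n+1)) : ℕ) := by simp
      rw [dif_pos hpos]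
      have hss : (⟨((Fin.succ s : Fin (n+1)) : ℕ) - 1, by have := s.isLt; omega⟩ : Fin n)
          = s := by simp [Fin.ext_iff]
      rw [hss, if_neg h2]
  · simp only at h1 h2 h3 h5
    rcases h5 with ⟨h5, h6⟩ | ⟨h5, h6⟩
    · subst h5; subst h6
      rcases (mem_x_iff hx2 s pv).mp h1 with hpa | hpb
      · left
        have hqb : qv = b s := by
          rcases (mem_x_iff hx2 s qv).mp h2 with h | h
          · exact absurd (hpa.trans h.symm) h3
          · exact h
        unfold stepF
        simp only
        rw [if_pos (hpa ▸ ha s)]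
        have hlt : ((Fin.castSucc s : Fin (n+1)) : ℕ) < n := by simp [s.isLt]
        rw [dif_pos hlt]
        have hss : (⟨((Fin.castSucc s : Fin (n+1)) : ℕ), hlt⟩ : Fin n) = s := by
          simp [Fin.ext_iff]
        rw [hss, if_pos h1, hqb]
      · right
        have hqa : qv = a s := by
          rcases (mem_x_iff hx2 s qv).mp h2 with h | h
          · exact h
          · exact absurd (hpb.trans h.symm) h3
        unfold stepF
        simp only
        rw [if_pos (hqa ▸ ha s)]
        have hlt : ((Fin.castSucc s : Fin (n+1)) : ℕ) < n := by simp [s.isLt]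
        rw [dif_pos hlt]
        have hss : (⟨((Fin.castSucc s : Fin (n+1)) : ℕ), hlt⟩ : Fin n) = s := by
          simp [Fin.ext_iff]
        rw [hss, if_pos h2, hpb]
    · subst h5; subst h6
      rcases (mem_x_iff hx2 s pv).mp h1 with hpa | hpb
      · right
        have hqb : qv = b s := by
          rcases (mem_x_iff hx2 s qv).mp h2 with h | h
          · exact absurd (hpa.trans h.symm) h3
          · exact h
        unfold stepF
        simp only
        rw [if_neg (hqb ▸ hb s)]
        have hpos : 0 < ((Fin.succ s : Fin (n+1)) : ℕ) := by simp
        rw [dif_pos hpos]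
        have hss : (⟨((Fin.succ s : Fin (n+1)) : ℕ) - 1, by have := s.isLt; omega⟩ : Fin n)
            = s := by simp [Fin.ext_iff]
        rw [hss, if_pos h2, hpa]
      · left
        have hqa : qv = a s := by
          rcases (mem_x_iff hx2 s qv).mp h2 with h | h
          · exact h
          · exact absurd (hpb.trans h.symm) h3
        unfold stepF
        simp only
        rw [if_neg (hpb ▸ hb s)]
        have hpos : 0 < ((Fin.succ s : Fin (n+1)) : ℕ) := by simp
        rw [dif_pos hpos]
        have hss : (⟨((Fin.succ s : Fin (n+1)) : ℕ) - 1, by have := s.isLt; omega⟩ : Fin n)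
            = s := by simp [Fin.ext_iff]
        rw [hss, if_pos h1, hqa]
  · exact absurd hEF (Finset.notMem_empty _)

/-! ### Level invariants of the orientation flow below a cut -/

private lemma step_below {t : Fin (n + 1)} {u u' : V × Fin (n + 1)}
    (hu : ((u.2 : ℕ)) < (t : ℕ)) (hstep : stepF A x a b u = some u') :
    ((u'.2 : ℕ)) < (t : ℕ) ∨ (u'.2 = t ∧ u'.1 ∈ A) := by
  obtain ⟨v, l⟩ := u
  simp only at hu
  unfold stepF at hstep
  simp only at hstep
  split_ifs at hstep with hvA hlt hmx hpos hmx'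
  · injection hstep with h; subst h; exact Or.inl hu
  · injection hstep with h; subst h
    by_cases he : (l : ℕ) + 1 = (t : ℕ)
    · exact Or.inr ⟨by simp [Fin.ext_iff]; omega, hvA⟩
    · exact Or.inl (by simp [Fin.val_succ]; omega)
  · injection hstep with h; subst h; exact Or.inl hu
  · injection hstep with h; subst h
    exact Or.inl (by simp [Fin.coe_castSucc]; omega)

private lemma step_from_t (ha : ∀ s, a s ∈ A) {t : Fin (n + 1)} {v : V} (hv : v ∉ A)
    {u : V × Fin (n + 1)} (hstep : stepF A x a b (v, t) = some u) :
    ((u.2 : ℕ)) < (t : ℕ) ∨ (u.2 = t ∧ u.1 ∈ A) := by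
  unfold stepF at hstep
  simp only at hstep
  rw [if_neg hv] at hstep
  split_ifs at hstep with hpos hmx
  · injection hstep with h; subst h; exact Or.inr ⟨rfl, ha _⟩
  · injection hstep with h; subst h
    exact Or.inl (by show (t : ℕ) - 1 < t; omega)

private lemma orbit_hits_A (ha : ∀ s, a s ∈ A) {t : Fin (n + 1)} {v : V} (hv : v ∉ A)
    {k : ℕ} (hk : 1 ≤ k)
    (hmin : ∀ j, 1 ≤ j → j < k → ∀ w : V × Fin (n + 1),
      (FFb (stepF A x a b))^[j] (some (v, t)) = some w → ((w.2 : ℕ)) < (t : ℕ))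
    {u : V × Fin (n + 1)}
    (hu : (FFb (stepF A x a b))^[k] (some (v, t)) = some u) :
    ((u.2 : ℕ)) < (t : ℕ) ∨ (u.2 = t ∧ u.1 ∈ A) := by
  obtain ⟨m, rfl⟩ : ∃ m, k = m + 1 := ⟨k - 1, by omega⟩
  rcases Nat.eq_zero_or_pos m with rfl | hm
  · rw [Function.iterate_one, FFb_some] at hu
    exact step_from_t ha hv hu
  · obtain ⟨w, hw⟩ := iter_defined _ (Nat.le_succ m) hu
    have hwb := hmin m (by omega) (by omega) w hw
    rw [Function.iterate_succ_apply', hw, FFb_some] at hu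
    exact step_below hwb hu

/-- The "first return to the cut" predicate: the forward orbit of `(v, t)` first
returns to level `t` at the site `a0`. -/
private def HitA (A : Finset V) {n : ℕ} (x : Fin n → Finset V) (a b : Fin n → V)
    (t : Fin (n + 1)) (v a0 : V) : Prop :=
  ∃ k, 1 ≤ k ∧ (FFb (stepF A x a b))^[k] (some (v, t)) = some (a0, t) ∧
    ∀ j, 1 ≤ j → j < k → ∀ w : V × Fin (n + 1),
      (FFb (stepF A x a b))^[j] (some (v, t)) = some w → ((w.2 : ℕ)) < (t : ℕ)

private lemma hitA_inj
    (hfinj : ∀ u v w : V × Fin (n + 1),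
      stepF A x a b u = some w → stepF A x a b v = some w → u = v)
    {t : Fin (n + 1)} {v₁ v₂ a0 : V}
    (h1 : HitA A x a b t v₁ a0) (h2 : HitA A x a b t v₂ a0) : v₁ = v₂ := by
  have core : ∀ v₁ v₂ : V, ∀ k₁ k₂ : ℕ, k₁ ≤ k₂ → 1 ≤ k₁ →
      (FFb (stepF A x a b))^[k₁] (some (v₁, t)) = some (a0, t) →
      (FFb (stepF A x a b))^[k₂] (some (v₂, t)) = some (a0, t) →
      (∀ j, 1 ≤ j → j < k₂ → ∀ w : V × Fin (n + 1),
        (FFb (stepF A x a b))^[j] (some (v₂, t)) = some w → ((w.2 : ℕ)) < (t : ℕ)) →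
      v₁ = v₂ := by
    intro v₁ v₂ k₁ k₂ hle h1k hit1 hit2 min2
    have hk2 : k₂ = k₁ + (k₂ - k₁) := by omega
    rw [hk2, Function.iterate_add_apply] at hit2
    have heq : (FFb (stepF A x a b))^[k₂ - k₁] (some (v₂, t)) = some (v₁, t) :=
      iter_inj _ hfinj k₁ hit2 hit1
    rcases Nat.eq_zero_or_pos (k₂ - k₁) with hz | hpos
    · rw [hz, Function.iterate_zero_apply] at heq
      injection heq with h
      exact congrArg Prod.fst h.symm
    · exfalso
      have := min2 (k₂ - k₁) hpos (by omega) (v₁, t) heq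
      simp at this
  obtain ⟨k₁, hk₁, hit1, min1⟩ := h1
  obtain ⟨k₂, hk₂, hit2, min2⟩ := h2
  rcases le_total k₁ k₂ with h | h
  · exact core v₁ v₂ k₁ k₂ h hk₁ hit1 hit2 min2
  · exact (core v₂ v₁ k₂ k₁ h hk₂ hit2 hit1 min1).symm

private lemma ret_hitA (ha : ∀ s, a s ∈ A) {t : Fin (n + 1)} {v : V} (hv : v ∉ A)
    (h : ∃ k, 1 ≤ k ∧ ∃ u : V × Fin (n + 1),
      (FFb (stepF A x a b))^[k] (some (v, t)) = some u ∧ (t : ℕ) ≤ ((u.2 : ℕ))) :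
    ∃ a0, a0 ∈ A ∧ HitA A x a b t v a0 := by
  classical
  obtain ⟨hk1, u, hu, hut⟩ := Nat.find_spec h
  have hmin : ∀ j, 1 ≤ j → j < Nat.find h → ∀ w : V × Fin (n + 1),
      (FFb (stepF A x a b))^[j] (some (v, t)) = some w → ((w.2 : ℕ)) < (t : ℕ) := by
    intro j hj1 hjk w hw
    have hnot := Nat.find_min h hjk
    push_neg at hnot
    exact hnot hj1 w hw
  rcases orbit_hits_A ha hv hk1 hmin hu with hlt | ⟨hut2, huA⟩
  · omega
  · refine ⟨u.1, huA, Nat.find h, hk1, ?_, hmin⟩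
    have : u = (u.1, t) := Prod.ext rfl hut2
    rw [← this]
    exact hu

end CutBounds

/-! ### The key bounds on the cut count -/

private lemma cut_bounds [Fintype V] [DecidableEq V] (A : Finset V) (E : Finset (Finset V))
    (hE : ∀ e ∈ E, ∃ i j : V, i ∈ A ∧ j ∉ A ∧ e = {i, j})
    (hA : 1 ≤ A.card) {n : ℕ} (hn : 0 < n)
    (x : Fin n → Finset V) (hx : ∀ s, x s ∈ E) (t : Fin (n + 1)) :
    Aᶜ.card ≤ A.card + cutCount E ∅ n x t ∧ 1 ≤ cutCount E ∅ n x t ∧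
      cutCount E ∅ n x t < Fintype.card V := by
  classical
  choose a b ha hb hx2 using fun s => hE (x s) (hx s)
  have hfinj : ∀ u v w : V × Fin (n + 1),
      stepF A x a b u = some w → stepF A x a b v = some w → u = v := by
    intro u v w h1 h2
    have b1 := back_of_step ha hb hx2 h1
    have b2 := back_of_step ha hb hx2 h2
    rw [b1] at b2
    exact Option.some_inj.mp b2
  set G := strandGraph E ∅ n x with hG
  set g : V → G.ConnectedComponent := fun i => G.connectedComponentMk (i, t) with hg
  have hcut : {c : G.ConnectedComponent | ∃ i : V, (i, t) ∈ c.supp}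
      = ↑(Finset.univ.image g) := by
    ext c
    constructor
    · rintro ⟨i, hi⟩
      exact Finset.mem_coe.mpr (Finset.mem_image.mpr
        ⟨i, Finset.mem_univ i, (SimpleGraph.ConnectedComponent.mem_supp_iff c (i, t)).mp hi⟩)
    · intro hc
      obtain ⟨i, -, hi⟩ := Finset.mem_image.mp (Finset.mem_coe.mp hc)
      exact ⟨i, (SimpleGraph.ConnectedComponent.mem_supp_iff c (i, t)).mpr hi⟩
  have hcc : cutCount E ∅ n x t = (Finset.univ.image g).card := by
    rw [cutCount, ← hG, hcut, Set.ncard_coe_finset]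
  -- a pair of distinct sites with the same component, via a bridge at level t
  obtain ⟨i, j, hij, hgij⟩ : ∃ i j : V, i ≠ j ∧ g i = g j := by
    by_cases hlt : (t : ℕ) < n
    · set s : Fin n := ⟨(t : ℕ), hlt⟩ with hs
      refine ⟨a s, b s, fun h => hb s (h ▸ ha s), ?_⟩
      have hstep : stepF A x a b (a s, t) = some (b s, t) := by
        unfold stepF
        simp only
        rw [if_pos (ha s), dif_pos hlt,
          if_pos ((mem_x_iff hx2 s (a s)).mpr (Or.inl rfl))]
      exact SimpleGraph.ConnectedComponent.sound
        (step_adj ha hb hx2 hx hstep).reachable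
    · have htv : (t : ℕ) = n := by have := t.isLt; omega
      have hpos : 0 < (t : ℕ) := by omega
      set s : Fin n := ⟨(t : ℕ) - 1, by omega⟩ with hs
      refine ⟨b s, a s, fun h => hb s (h.symm ▸ ha s), ?_⟩
      have hstep : stepF A x a b (b s, t) = some (a s, t) := by
        unfold stepF
        simp only
        rw [if_neg (hb s), dif_pos hpos,
          if_pos ((mem_x_iff hx2 s (b s)).mpr (Or.inr rfl))]
      exact SimpleGraph.ConnectedComponent.sound
        (step_adj ha hb hx2 hx hstep).reachable
  obtain ⟨v0, hv0⟩ := Finset.card_pos.mp hA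
  refine ⟨?_, ?_, ?_⟩
  · -- main lower bound via the injection Aᶜ ↪ A ⊕ (components through the cut)
    rw [hcc]
    set Ret : V → Prop := fun v => ∃ k, 1 ≤ k ∧ ∃ u : V × Fin (n + 1),
      (FFb (stepF A x a b))^[k] (some (v, t)) = some u ∧ (t : ℕ) ≤ ((u.2 : ℕ))
      with hRet
    have key : Nat.card {v // v ∈ Aᶜ}
        ≤ Nat.card ({v // v ∈ A} ⊕ {c // c ∈ Finset.univ.image g}) := by
      have hvnA : ∀ v : {v // v ∈ Aᶜ}, (v : V) ∉ A := fun v => Finset.mem_compl.mp v.2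
      apply Nat.card_le_card_of_injective (fun v =>
        if h : Ret v.1 then
          Sum.inl ⟨(ret_hitA ha (hvnA v) h).choose, (ret_hitA ha (hvnA v) h).choose_spec.1⟩
        else
          Sum.inr ⟨g v.1, Finset.mem_image.mpr ⟨v.1, Finset.mem_univ _, rfl⟩⟩)
      intro v₁ v₂ heq
      dsimp only at heq
      by_cases h1 : Ret v₁.1 <;> by_cases h2 : Ret v₂.1
      · rw [dif_pos h1, dif_pos h2] at heq
        have hc : (ret_hitA ha (hvnA v₁) h1).choose
            = (ret_hitA ha (hvnA v₂) h2).choose := by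
          have := Sum.inl.inj heq
          exact congrArg Subtype.val this
        have hit1 := (ret_hitA ha (hvnA v₁) h1).choose_spec.2
        have hit2 := (ret_hitA ha (hvnA v₂) h2).choose_spec.2
        rw [hc] at hit1
        exact Subtype.ext (hitA_inj hfinj hit1 hit2)
      · rw [dif_pos h1, dif_neg h2] at heq; exact absurd heq (by simp)
      · rw [dif_neg h1, dif_pos h2] at heq; exact absurd heq (by simp)
      · rw [dif_neg h1, dif_neg h2] at heq
        have hgg : g v₁.1 = g v₂.1 := congrArg Subtype.val (Sum.inr.inj heq)
        have hreach : G.Reachable (v₁.1, t) (v₂.1, t) :=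
          (SimpleGraph.ConnectedComponent.eq).mp hgg
        obtain ⟨k, hk | hk⟩ := reach_comparable G (stepF A x a b) hfinj
          (fun p q h => adj_step ha hb hx2 h) hreach
        · rcases Nat.eq_zero_or_pos k with rfl | hkpos
          · rw [Function.iterate_zero_apply] at hk
            injection hk with h
            exact Subtype.ext (congrArg Prod.fst h)
          · exact absurd ⟨k, hkpos, (v₂.1, t), hk, le_refl _⟩ h1
        · rcases Nat.eq_zero_or_pos k with rfl | hkpos
          · rw [Function.iterate_zero_apply] at hk
            injection hk with h
            exact Subtype.ext (congrArg Prod.fst h).symm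
          · exact absurd ⟨k, hkpos, (v₁.1, t), hk, le_refl _⟩ h2
    have e1 : ∀ (s : Finset V), Nat.card {v // v ∈ s} = s.card := fun s => by
      rw [Nat.card_eq_fintype_card, Fintype.card_coe]
    have e2 : Nat.card {c // c ∈ Finset.univ.image g} = (Finset.univ.image g).card := by
      rw [Nat.card_eq_fintype_card, Fintype.card_coe]
    rw [Nat.card_sum, e1, e1, e2] at key
    exact key
  · rw [hcc]
    exact Finset.card_pos.mpr ⟨g v0, Finset.mem_image.mpr ⟨v0, Finset.mem_univ _, rfl⟩⟩
  · rw [hcc]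
    have himg : Finset.univ.image g = (Finset.univ.erase i).image g := by
      apply Finset.Subset.antisymm
      · intro c hc
        obtain ⟨v, -, hv⟩ := Finset.mem_image.mp hc
        by_cases hvi : v = i
        · subst hvi
          exact Finset.mem_image.mpr
            ⟨j, Finset.mem_erase.mpr ⟨hij.symm, Finset.mem_univ _⟩, hgij.symm ▸ hv⟩
        · exact Finset.mem_image.mpr
            ⟨v, Finset.mem_erase.mpr ⟨hvi, Finset.mem_univ _⟩, hv⟩
      · exact Finset.image_subset_image (Finset.erase_subset _ _)
    rw [himg]
    calc ((Finset.univ.erase i).image g).card ≤ (Finset.univ.erase i).card :=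
          Finset.card_image_le
      _ < Finset.univ.card := Finset.card_erase_lt_of_mem (Finset.mem_univ i)
      _ = Fintype.card V := Finset.card_univ

/-- For a bipartite AFM loop representation with `1 ≤ |𝒜| ≤ |ℬ|`,
the number of loops passing through any cut of any configuration differs from that
of any other cut of any other configuration by at most `2|𝒜| − 1`. -/
theorem cut_count_difference [Fintype V] [DecidableEq V]
    (A : Finset V) (E : Finset (Finset V))
    (hE : ∀ e ∈ E, ∃ i j : V, i ∈ A ∧ j ∉ A ∧ e = {i, j})
    (hA : 1 ≤ A.card) (hAB : A.card ≤ Aᶜ.card)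
    (B : ℕ) (hB : 0 < B)
    (x x' : Fin (2 * B) → Finset V) (hx : ∀ t, x t ∈ E) (hx' : ∀ t, x' t ∈ E)
    (t t' : Fin (2 * B + 1)) :
    |(cutCount E ∅ (2 * B) x t : ℤ) - (cutCount E ∅ (2 * B) x' t' : ℤ)|
      ≤ 2 * (A.card : ℤ) - 1 := by
  have hn : 0 < 2 * B := by omega
  obtain ⟨h1a, h1b, h1c⟩ := cut_bounds A E hE hA hn x hx t
  obtain ⟨h2a, h2b, h2c⟩ := cut_bounds A E hE hA hn x' hx' t'
  have hN : A.card + Aᶜ.card = Fintype.card V := Finset.card_add_card_compl A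
  rw [abs_sub_le_iff]
  constructor <;> omega
end

section
/- Suppose 1 ≤ |𝒜| ≤ |ℬ|. For any two configurations x, y ∈ ℰ^{2B} and any t ∈ {1,…,2B}, define the hybrid configurations z = (y_1,…,y_{t−1},x_t,…,x_{2B}) and η = (x_1,…,x_{t−1},y_t,…,y_{2B}). Then L(x) + L(y) ≤ L(z) + L(η) + 4|𝒜| − 2; equivalently, 2^{L(x)} · 2^{L(y)} ≤ 2^{4|𝒜|−2} · 2^{L(z)} · 2^{L(η)}. -/
open SimpleGraph

variable {V : Type*}

namespace EncodingAFM

open Relation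

section QuotCount
variable {α : Type*}

def pairRel (l : List (α × α)) : α → α → Prop :=
  fun i j => ∃ p ∈ l, p = (i, j) ∨ p = (j, i)

lemma eqvGen_pairRel_nil {i j : α} (h : EqvGen (pairRel ([] : List (α × α))) i j) : i = j := by
  induction h with
  | rel x y hxy => obtain ⟨p, hp, -⟩ := hxy; exact absurd hp List.not_mem_nil
  | refl x => rfl
  | symm x y _ ih => exact ih.symm
  | trans x y z _ _ ih1 ih2 => exact ih1.trans ih2

lemma eqvGen_pairRel_cons {p : α × α} {l : List (α × α)} {x y : α}
    (h : EqvGen (pairRel (p :: l)) x y) :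
    EqvGen (pairRel l) x y ∨
      ((EqvGen (pairRel l) x p.1 ∨ EqvGen (pairRel l) x p.2) ∧
       (EqvGen (pairRel l) y p.1 ∨ EqvGen (pairRel l) y p.2)) := by
  induction h with
  | rel a b hab =>
    obtain ⟨q, hq, hq2⟩ := hab
    rcases List.mem_cons.mp hq with rfl | hq'
    · rcases hq2 with h' | h'
      · right
        refine ⟨Or.inl ?_, Or.inr ?_⟩
        · rw [h']; exact EqvGen.refl a
        · rw [h']; exact EqvGen.refl b
      · right
        refine ⟨Or.inr ?_, Or.inl ?_⟩
        · rw [h']; exact EqvGen.refl a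
        · rw [h']; exact EqvGen.refl b
    · left; exact EqvGen.rel a b ⟨q, hq', hq2⟩
  | refl a => left; exact EqvGen.refl a
  | symm a b _ ih =>
    rcases ih with h' | ⟨h1, h2⟩
    · left; exact EqvGen.symm _ _ h'
    · right; exact ⟨h2, h1⟩
  | trans a b c _ _ ih1 ih2 =>
    rcases ih1 with h1 | ⟨ha, hb⟩
    · rcases ih2 with h2 | ⟨hb', hc⟩
      · left; exact EqvGen.trans _ _ _ h1 h2
      · right
        refine ⟨?_, hc⟩
        rcases hb' with h' | h'
        · exact Or.inl (EqvGen.trans _ _ _ h1 h')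
        · exact Or.inr (EqvGen.trans _ _ _ h1 h')
    · rcases ih2 with h2 | ⟨hb', hc⟩
      · right
        refine ⟨ha, ?_⟩
        rcases hb with h' | h'
        · exact Or.inl (EqvGen.trans _ _ _ (EqvGen.symm _ _ h2) h')
        · exact Or.inr (EqvGen.trans _ _ _ (EqvGen.symm _ _ h2) h')
      · right; exact ⟨ha, hc⟩

lemma card_quot_pairRel_cons_le [Finite α] (p : α × α) (l : List (α × α)) :
    Nat.card (Quot (pairRel l)) ≤ Nat.card (Quot (pairRel (p :: l))) + 1 := by
  classical
  have hsub : ∀ a b : α, pairRel l a b →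
      Quot.mk (pairRel (p :: l)) a = Quot.mk (pairRel (p :: l)) b := by
    intro a b hab
    obtain ⟨q, hq, h2⟩ := hab
    exact Quot.sound ⟨q, List.mem_cons_of_mem _ hq, h2⟩
  have key : ∀ a b : α, Quot.mk (pairRel (p :: l)) a = Quot.mk (pairRel (p :: l)) b →
      Quot.mk (pairRel l) a = Quot.mk (pairRel l) b ∨
      ((Quot.mk (pairRel l) a = Quot.mk (pairRel l) p.1 ∨
        Quot.mk (pairRel l) a = Quot.mk (pairRel l) p.2) ∧
       (Quot.mk (pairRel l) b = Quot.mk (pairRel l) p.1 ∨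
        Quot.mk (pairRel l) b = Quot.mk (pairRel l) p.2)) := by
    intro a b h
    rcases eqvGen_pairRel_cons (Quot.eqvGen_exact h) with h' | ⟨ha, hb⟩
    · exact Or.inl (Quot.eqvGen_sound h')
    · exact Or.inr ⟨ha.imp Quot.eqvGen_sound Quot.eqvGen_sound,
        hb.imp Quot.eqvGen_sound Quot.eqvGen_sound⟩
  have hginj : Function.Injective (fun q : Quot (pairRel l) =>
      if q = Quot.mk (pairRel l) p.1 then (Sum.inr () : Quot (pairRel (p :: l)) ⊕ Unit)
      else Sum.inl (Quot.lift (Quot.mk (pairRel (p :: l))) hsub q)) := by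
    intro q q' hqq
    dsimp only at hqq
    by_cases h1 : q = Quot.mk (pairRel l) p.1 <;>
      by_cases h2 : q' = Quot.mk (pairRel l) p.1
    · exact h1.trans h2.symm
    · rw [if_pos h1, if_neg h2] at hqq; simp at hqq
    · rw [if_neg h1, if_pos h2] at hqq; simp at hqq
    · rw [if_neg h1, if_neg h2] at hqq
      simp only [Sum.inl.injEq] at hqq
      obtain ⟨a, rfl⟩ := Quot.exists_rep q
      obtain ⟨b, rfl⟩ := Quot.exists_rep q'
      rcases key a b hqq with h' | ⟨ha | ha, hb | hb⟩
      · exact h'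
      · exact absurd ha h1
      · exact absurd ha h1
      · exact absurd hb h2
      · exact ha.trans hb.symm
  have hcard := Nat.card_le_card_of_injective _ hginj
  have hu : Nat.card Unit = 1 := Nat.card_unique
  rw [Nat.card_sum, hu] at hcard
  exact hcard

lemma card_le_card_quot_pairRel [Finite α] (l : List (α × α)) :
    Nat.card α ≤ Nat.card (Quot (pairRel l)) + l.length := by
  induction l with
  | nil =>
    have hinj : Function.Injective (Quot.mk (pairRel ([] : List (α × α)))) :=
      fun a b h => eqvGen_pairRel_nil (Quot.eqvGen_exact h)
    simpa using Nat.card_le_card_of_injective _ hinj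
  | cons p l ih =>
    have h1 := card_quot_pairRel_cons_le (α := α) p l
    simp only [List.length_cons]
    omega

lemma eqvGen_lift {β γ : Type*} {r : β → β → Prop} {p : γ → γ → Prop} (f : β → γ)
    (hmap : ∀ a b, r a b → EqvGen p (f a) (f b)) {a b : β} (h : EqvGen r a b) :
    EqvGen p (f a) (f b) := by
  induction h with
  | rel _ _ h => exact hmap _ _ h
  | refl x => exact EqvGen.refl (f x)
  | symm _ _ _ ih => exact EqvGen.symm _ _ ih
  | trans _ _ _ _ _ ih1 ih2 => exact EqvGen.trans _ _ _ ih1 ih2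

end QuotCount

section AbstractGraph
variable {W : Type*}

lemma reachable_elim {H : SimpleGraph W} {u v : W} (h : H.Reachable u v) :
    u = v ∨ ∃ z, H.Adj z v := by
  rw [SimpleGraph.reachable_iff_reflTransGen] at h
  rcases h.cases_tail with h' | ⟨c, _, hcv⟩
  · exact Or.inl h'.symm
  · exact Or.inr ⟨c, hcv⟩

lemma eq_of_reachable_sinks {H : SimpleGraph W} {D : W → W → Prop}
    (hadj : ∀ u v, H.Adj u v → D u v ∨ D v u)
    (hfun : ∀ u v v', D u v → D u v' → v = v')
    {u0 v0 : W} (hu : ∀ v, ¬ D u0 v) (hv : ∀ v, ¬ D v0 v)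
    (h : H.Reachable u0 v0) : u0 = v0 := by
  rw [SimpleGraph.reachable_iff_reflTransGen] at h
  have key : ∀ w, Relation.ReflTransGen H.Adj u0 w → Relation.ReflTransGen D w u0 := by
    intro w hw
    induction hw with
    | refl => exact Relation.ReflTransGen.refl
    | @tail b c hab hbc ih =>
      rcases hadj _ _ hbc with hD | hD
      · rcases ih.cases_head with heq | ⟨z, hz, hz2⟩
        · exact absurd (heq ▸ hD) (hu _)
        · have hcz : c = z := hfun _ _ _ hD hz
          rw [hcz]
          exact hz2
      · exact Relation.ReflTransGen.head hD ih
  rcases (key v0 h).cases_head with heq | ⟨z, hz, _⟩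
  · exact heq.symm
  · exact absurd hz (hv _)

variable {G Q R : SimpleGraph W} {mid s1 s2 : W → Prop}

lemma propagate_pure
    (hsplit : ∀ u v, G.Adj u v → Q.Adj u v ∨ R.Adj u v)
    (htri : ∀ v, mid v ∨ s1 v ∨ s2 v)
    (hQ : ∀ u v, Q.Adj u v → ¬ s2 u ∧ ¬ s2 v)
    (hR : ∀ u v, R.Adj u v → ¬ s1 u ∧ ¬ s1 v)
    {v : W} (hs : s1 v) (hnc : ∀ w, mid w → ¬ G.Reachable v w)
    {w : W} (h : G.Reachable v w) : s1 w := by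
  rw [SimpleGraph.reachable_iff_reflTransGen] at h
  induction h with
  | refl => exact hs
  | @tail b c hab hbc ih =>
    have hvc : G.Reachable v c := by
      rw [SimpleGraph.reachable_iff_reflTransGen]
      exact hab.tail hbc
    rcases hsplit _ _ hbc with hq | hr
    · rcases htri c with hm | h1 | h2
      · exact absurd hvc (hnc c hm)
      · exact h1
      · exact absurd h2 (hQ _ _ hq).2
    · exact absurd ih (hR _ _ hr).1

lemma reachQ_of_reachG
    (hsplit : ∀ u v, G.Adj u v → Q.Adj u v ∨ R.Adj u v)
    (hR : ∀ u v, R.Adj u v → ¬ s1 u ∧ ¬ s1 v)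
    {w : W} (hlow : ∀ u, Q.Reachable w u → s1 u)
    {v : W} (h : G.Reachable w v) : Q.Reachable w v := by
  rw [SimpleGraph.reachable_iff_reflTransGen] at h
  induction h with
  | refl => exact ⟨SimpleGraph.Walk.nil⟩
  | @tail b c hab hbc ih =>
    rcases hsplit _ _ hbc with hq | hr
    · exact ih.trans hq.reachable
    · exact absurd (hlow _ ih) (hR _ _ hr).1

lemma card_pure_eq
    (hsplit : ∀ u v, G.Adj u v → Q.Adj u v ∨ R.Adj u v)
    (hQG : ∀ u v, Q.Adj u v → G.Adj u v)
    (hR : ∀ u v, R.Adj u v → ¬ s1 u ∧ ¬ s1 v) :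
    Nat.card {C : G.ConnectedComponent // ∀ v, G.connectedComponentMk v = C → s1 v} =
    Nat.card {D : Q.ConnectedComponent // ∀ v, Q.connectedComponentMk v = D → s1 v} := by
  have hQG' : Q ≤ G := fun u v h => hQG u v h
  let m : Q.ConnectedComponent → G.ConnectedComponent :=
    Quot.lift (fun w => G.connectedComponentMk w)
      (fun a b hab => ConnectedComponent.sound (hab.mono hQG'))
  have hm : ∀ w, m (Q.connectedComponentMk w) = G.connectedComponentMk w := fun _ => rfl
  have key : ∀ (w : W), (∀ u, Q.connectedComponentMk u = Q.connectedComponentMk w → s1 u) →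
      ∀ v, G.Reachable w v → Q.Reachable w v := by
    intro w hw v hv
    exact reachQ_of_reachG hsplit hR (fun u hu => hw u (ConnectedComponent.sound hu).symm) hv
  let F : {D : Q.ConnectedComponent // ∀ v, Q.connectedComponentMk v = D → s1 v} →
          {C : G.ConnectedComponent // ∀ v, G.connectedComponentMk v = C → s1 v} :=
    fun D => ⟨m D.1, by
      obtain ⟨w, hwD0⟩ := D.1.exists_rep
      have hwD : Q.connectedComponentMk w = D.1 := hwD0
      intro v hv
      have hmw : m D.1 = G.connectedComponentMk w := by rw [← hwD]; exact hm w
      have hreach : G.Reachable w v := (ConnectedComponent.eq.mp (hv.trans hmw)).symm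
      have hlow : ∀ u, Q.connectedComponentMk u = Q.connectedComponentMk w → s1 u := by
        intro u hu; exact D.2 u (by rw [hu, hwD])
      exact hlow v (ConnectedComponent.sound (key w hlow v hreach)).symm⟩
  have hFinj : Function.Injective F := by
    intro D D' h
    obtain ⟨w, hw0⟩ := D.1.exists_rep
    obtain ⟨w', hw'0⟩ := D'.1.exists_rep
    have hw : Q.connectedComponentMk w = D.1 := hw0
    have hw' : Q.connectedComponentMk w' = D'.1 := hw'0
    have h1 : G.connectedComponentMk w = G.connectedComponentMk w' := by
      have h2 := congrArg Subtype.val h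
      have h3 : m D.1 = m D'.1 := h2
      rw [← hw, ← hw'] at h3
      exact h3
    have hreach : G.Reachable w w' := ConnectedComponent.eq.mp h1
    have hlow : ∀ u, Q.connectedComponentMk u = Q.connectedComponentMk w → s1 u := by
      intro u hu; exact D.2 u (by rw [hu, hw])
    have hQr : Q.Reachable w w' := key w hlow w' hreach
    apply Subtype.ext
    rw [← hw, ← hw']
    exact ConnectedComponent.sound hQr
  have hFsurj : Function.Surjective F := by
    intro C
    obtain ⟨v, hv0⟩ := C.1.exists_rep
    have hv : G.connectedComponentMk v = C.1 := hv0
    refine ⟨⟨Q.connectedComponentMk v, ?_⟩, ?_⟩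
    · intro u hu
      have hr : Q.Reachable v u := (ConnectedComponent.eq.mp hu).symm
      exact C.2 u ((ConnectedComponent.sound (hr.mono hQG')).symm.trans hv)
    · apply Subtype.ext
      show m (Q.connectedComponentMk v) = C.1
      rw [hm]
      exact hv
  exact (Nat.card_congr (Equiv.ofBijective F ⟨hFinj, hFsurj⟩)).symm

lemma card_cc_decomp [Finite W]
    (hsplit : ∀ u v, G.Adj u v → Q.Adj u v ∨ R.Adj u v)
    (htri : ∀ v, mid v ∨ s1 v ∨ s2 v)
    (hm1 : ∀ v, mid v → ¬ s1 v) (hm2 : ∀ v, mid v → ¬ s2 v) (h12 : ∀ v, s1 v → ¬ s2 v)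
    (hQ : ∀ u v, Q.Adj u v → ¬ s2 u ∧ ¬ s2 v)
    (hR : ∀ u v, R.Adj u v → ¬ s1 u ∧ ¬ s1 v) :
    Nat.card G.ConnectedComponent =
      Nat.card {C : G.ConnectedComponent // ∃ v, mid v ∧ G.connectedComponentMk v = C} +
      Nat.card {C : G.ConnectedComponent // ∀ v, G.connectedComponentMk v = C → s1 v} +
      Nat.card {C : G.ConnectedComponent // ∀ v, G.connectedComponentMk v = C → s2 v} := by
  classical
  letI : Fintype G.ConnectedComponent := Fintype.ofFinite _
  have hcov : ∀ C : G.ConnectedComponent,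
      (∃ v, mid v ∧ G.connectedComponentMk v = C) ∨
      (∀ v, G.connectedComponentMk v = C → s1 v) ∨
      (∀ v, G.connectedComponentMk v = C → s2 v) := by
    intro C
    by_cases hc : ∃ v, mid v ∧ G.connectedComponentMk v = C
    · exact Or.inl hc
    obtain ⟨v, hv0⟩ := C.exists_rep
    have hv : G.connectedComponentMk v = C := hv0
    have hnomid : ∀ w, mid w → ¬ G.Reachable v w := by
      intro w hw hr
      exact hc ⟨w, hw, (ConnectedComponent.sound hr).symm.trans hv⟩
    rcases htri v with hm | h1 | h2
    · exact absurd ⟨v, hm, hv⟩ hc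
    · refine Or.inr (Or.inl ?_)
      intro w hw
      have hreach : G.Reachable v w := ConnectedComponent.eq.mp (hv.trans hw.symm)
      exact propagate_pure hsplit htri hQ hR h1 hnomid hreach
    · refine Or.inr (Or.inr ?_)
      intro w hw
      have hreach : G.Reachable v w := ConnectedComponent.eq.mp (hv.trans hw.symm)
      refine propagate_pure (s1 := s2) (s2 := s1) (Q := R) (R := Q) (mid := mid)
        (fun u v h => (hsplit u v h).symm)
        (fun u => by rcases htri u with h | h | h <;> tauto)
        hR hQ h2 hnomid hreach
  have hd1 : ∀ C : G.ConnectedComponent, (∃ v, mid v ∧ G.connectedComponentMk v = C) →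
      ¬ (∀ v, G.connectedComponentMk v = C → s1 v) := by
    rintro C ⟨v, hm, hv⟩ hp
    exact hm1 v hm (hp v hv)
  have hd2 : ∀ C : G.ConnectedComponent, (∃ v, mid v ∧ G.connectedComponentMk v = C) →
      ¬ (∀ v, G.connectedComponentMk v = C → s2 v) := by
    rintro C ⟨v, hm, hv⟩ hp
    exact hm2 v hm (hp v hv)
  have hd3 : ∀ C : G.ConnectedComponent, (∀ v, G.connectedComponentMk v = C → s1 v) →
      ¬ (∀ v, G.connectedComponentMk v = C → s2 v) := by
    intro C hp1 hp2
    obtain ⟨v, hv0⟩ := C.exists_rep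
    have hv : G.connectedComponentMk v = C := hv0
    exact h12 v (hp1 v hv) (hp2 v hv)
  rw [Nat.card_eq_fintype_card, Nat.card_eq_fintype_card, Nat.card_eq_fintype_card,
      Nat.card_eq_fintype_card, Fintype.card_subtype, Fintype.card_subtype, Fintype.card_subtype,
      ← Finset.card_univ]
  have hunion : (Finset.univ.filter (fun C : G.ConnectedComponent =>
        ∃ v, mid v ∧ G.connectedComponentMk v = C)) ∪
      (Finset.univ.filter (fun C => ∀ v, G.connectedComponentMk v = C → s1 v)) ∪
      (Finset.univ.filter (fun C => ∀ v, G.connectedComponentMk v = C → s2 v)) = Finset.univ := by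
    ext C
    simp only [Finset.mem_union, Finset.mem_filter, Finset.mem_univ, true_and, iff_true]
    rcases hcov C with h | h | h
    exacts [Or.inl (Or.inl h), Or.inl (Or.inr h), Or.inr h]
  have hdis1 : Disjoint
      (Finset.univ.filter (fun C : G.ConnectedComponent =>
        ∃ v, mid v ∧ G.connectedComponentMk v = C))
      (Finset.univ.filter (fun C => ∀ v, G.connectedComponentMk v = C → s1 v)) := by
    rw [Finset.disjoint_left]
    intro C hC hC'
    simp only [Finset.mem_filter, Finset.mem_univ, true_and] at hC hC'
    exact hd1 C hC hC'
  have hdis2 : Disjoint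
      ((Finset.univ.filter (fun C : G.ConnectedComponent =>
        ∃ v, mid v ∧ G.connectedComponentMk v = C)) ∪
       (Finset.univ.filter (fun C => ∀ v, G.connectedComponentMk v = C → s1 v)))
      (Finset.univ.filter (fun C => ∀ v, G.connectedComponentMk v = C → s2 v)) := by
    rw [Finset.disjoint_left]
    intro C hC hC'
    simp only [Finset.mem_union, Finset.mem_filter, Finset.mem_univ, true_and] at hC hC'
    rcases hC with hC | hC
    · exact hd2 C hC hC'
    · exact hd3 C hC hC'
  conv_lhs => rw [← hunion]
  rw [Finset.card_union_of_disjoint hdis2, Finset.card_union_of_disjoint hdis1]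

lemma trace_eqvGen
    (hsplit : ∀ u v, G.Adj u v → Q.Adj u v ∨ R.Adj u v)
    (htri : ∀ v, mid v ∨ s1 v ∨ s2 v)
    (hQ : ∀ u v, Q.Adj u v → ¬ s2 u ∧ ¬ s2 v)
    (hR : ∀ u v, R.Adj u v → ¬ s1 u ∧ ¬ s1 v)
    {u v : W} (hu : mid u) (hv : mid v) (h : G.Reachable u v) :
    Relation.EqvGen (fun p q => (mid p ∧ mid q) ∧ (Q.Reachable p q ∨ R.Reachable p q)) u v := by
  set r : W → W → Prop :=
    fun p q => (mid p ∧ mid q) ∧ (Q.Reachable p q ∨ R.Reachable p q) with hr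
  have key : ∀ w, Relation.ReflTransGen G.Adj u w →
      ∃ m, mid m ∧ Relation.EqvGen r u m ∧ (Q.Reachable m w ∨ R.Reachable m w) := by
    intro w hw
    induction hw with
    | refl => exact ⟨u, hu, Relation.EqvGen.refl u, Or.inl ⟨SimpleGraph.Walk.nil⟩⟩
    | @tail b c hab hbc ih =>
      obtain ⟨m, hm, hum, hmb⟩ := ih
      rcases hsplit _ _ hbc with hq | hrr
      · rcases hmb with hmb | hmb
        · exact ⟨m, hm, hum, Or.inl (hmb.trans hq.reachable)⟩
        · rcases reachable_elim hmb with heq | ⟨z, hz⟩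
          · exact ⟨b, heq ▸ hm, heq ▸ hum, Or.inl hq.reachable⟩
          · have hnb1 : ¬ s1 b := (hR _ _ hz).2
            have hnb2 : ¬ s2 b := (hQ _ _ hq).1
            have hmidb : mid b := by
              rcases htri b with h' | h' | h'
              · exact h'
              · exact absurd h' hnb1
              · exact absurd h' hnb2
            exact ⟨b, hmidb,
              Relation.EqvGen.trans _ _ _ hum
                (Relation.EqvGen.rel _ _ ⟨⟨hm, hmidb⟩, Or.inr hmb⟩),
              Or.inl hq.reachable⟩
      · rcases hmb with hmb | hmb
        · rcases reachable_elim hmb with heq | ⟨z, hz⟩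
          · exact ⟨b, heq ▸ hm, heq ▸ hum, Or.inr hrr.reachable⟩
          · have hnb2 : ¬ s2 b := (hQ _ _ hz).2
            have hnb1 : ¬ s1 b := (hR _ _ hrr).1
            have hmidb : mid b := by
              rcases htri b with h' | h' | h'
              · exact h'
              · exact absurd h' hnb1
              · exact absurd h' hnb2
            exact ⟨b, hmidb,
              Relation.EqvGen.trans _ _ _ hum
                (Relation.EqvGen.rel _ _ ⟨⟨hm, hmidb⟩, Or.inl hmb⟩),
              Or.inr hrr.reachable⟩
        · exact ⟨m, hm, hum, Or.inr (hmb.trans hrr.reachable)⟩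
  obtain ⟨m, hm, hum, hmv⟩ := key v ((SimpleGraph.reachable_iff_reflTransGen u v).mp h)
  exact Relation.EqvGen.trans _ _ _ hum (Relation.EqvGen.rel _ _ ⟨⟨hm, hv⟩, hmv⟩)

end AbstractGraph

section Strand
variable {V : Type*} (A : Finset V) (E : Finset (Finset V)) (n : ℕ)

def strandRelF (F : Fin n → Prop) (w : Fin n → Finset V) (p q : V × Fin (n + 1)) : Prop :=
  ∃ s : Fin n, F s ∧
    ((p.1 = q.1 ∧ p.1 ∉ w s ∧ p.2 = Fin.castSucc s ∧ q.2 = Fin.succ s) ∨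
     (w s ∈ E ∧ p.1 ∈ w s ∧ q.1 ∈ w s ∧ p.1 ≠ q.1 ∧
       ((p.2 = Fin.castSucc s ∧ q.2 = Fin.castSucc s) ∨
        (p.2 = Fin.succ s ∧ q.2 = Fin.succ s))))

def QF (F : Fin n → Prop) (w : Fin n → Finset V) : SimpleGraph (V × Fin (n + 1)) :=
  SimpleGraph.fromRel (strandRelF E n F w)

lemma strandRel_split (tc : ℕ) (w : Fin n → Finset V) (p q : V × Fin (n+1))
    (h : strandRel E ∅ n w p q) :
    strandRelF E n (fun s => (s : ℕ) < tc) w p q ∨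
    strandRelF E n (fun s => ¬((s : ℕ) < tc)) w p q := by
  classical
  obtain ⟨s, h | h | h⟩ := h
  · by_cases hs : (s : ℕ) < tc
    · exact Or.inl ⟨s, hs, Or.inl h⟩
    · exact Or.inr ⟨s, hs, Or.inl h⟩
  · by_cases hs : (s : ℕ) < tc
    · exact Or.inl ⟨s, hs, Or.inr h⟩
    · exact Or.inr ⟨s, hs, Or.inr h⟩
  · exact absurd h.1 (Finset.notMem_empty _)

lemma strandRelF_mem (F : Fin n → Prop) (w : Fin n → Finset V) {p q : V × Fin (n+1)}
    (h : strandRelF E n F w p q) : strandRel E ∅ n w p q := by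
  obtain ⟨s, _, h | h⟩ := h
  · exact ⟨s, Or.inl h⟩
  · exact ⟨s, Or.inr (Or.inl h)⟩

lemma strandGraph_adj_split (tc : ℕ) (w : Fin n → Finset V) {u v : V × Fin (n+1)}
    (h : (strandGraph E ∅ n w).Adj u v) :
    (QF E n (fun s => (s : ℕ) < tc) w).Adj u v ∨
    (QF E n (fun s => ¬((s : ℕ) < tc)) w).Adj u v := by
  obtain ⟨hne, h | h⟩ := (SimpleGraph.fromRel_adj (strandRel E ∅ n w) u v).mp h
  · rcases strandRel_split E n tc w u v h with h' | h'
    · exact Or.inl ((SimpleGraph.fromRel_adj _ u v).mpr ⟨hne, Or.inl h'⟩)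
    · exact Or.inr ((SimpleGraph.fromRel_adj _ u v).mpr ⟨hne, Or.inl h'⟩)
  · rcases strandRel_split E n tc w v u h with h' | h'
    · exact Or.inl ((SimpleGraph.fromRel_adj _ u v).mpr ⟨hne, Or.inr h'⟩)
    · exact Or.inr ((SimpleGraph.fromRel_adj _ u v).mpr ⟨hne, Or.inr h'⟩)

lemma QF_le (F : Fin n → Prop) (w : Fin n → Finset V) {u v : V × Fin (n+1)}
    (h : (QF E n F w).Adj u v) : (strandGraph E ∅ n w).Adj u v := by
  obtain ⟨hne, h | h⟩ := (SimpleGraph.fromRel_adj (strandRelF E n F w) u v).mp h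
  · exact (SimpleGraph.fromRel_adj _ u v).mpr ⟨hne, Or.inl (strandRelF_mem E n F w h)⟩
  · exact (SimpleGraph.fromRel_adj _ u v).mpr ⟨hne, Or.inr (strandRelF_mem E n F w h)⟩

lemma strandRelF_layer {F : Fin n → Prop} {w : Fin n → Finset V} {p q : V × Fin (n+1)}
    (h : strandRelF E n F w p q) :
    ∃ s : Fin n, F s ∧ ((p.2 : ℕ) = (s : ℕ) ∨ (p.2 : ℕ) = (s : ℕ) + 1) ∧
      ((q.2 : ℕ) = (s : ℕ) ∨ (q.2 : ℕ) = (s : ℕ) + 1) := by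
  obtain ⟨s, hF, h⟩ := h
  refine ⟨s, hF, ?_⟩
  rcases h with ⟨-, -, h3, h4⟩ | ⟨-, -, -, -, ⟨h3, h4⟩ | ⟨h3, h4⟩⟩
  · exact ⟨Or.inl (by rw [h3, Fin.coe_castSucc]), Or.inr (by rw [h4, Fin.val_succ])⟩
  · exact ⟨Or.inl (by rw [h3, Fin.coe_castSucc]), Or.inl (by rw [h4, Fin.coe_castSucc])⟩
  · exact ⟨Or.inr (by rw [h3, Fin.val_succ]), Or.inr (by rw [h4, Fin.val_succ])⟩

lemma QF_pre_le_layer {tc : ℕ} {w : Fin n → Finset V} {u v : V × Fin (n+1)}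
    (h : (QF E n (fun s => (s : ℕ) < tc) w).Adj u v) :
    (u.2 : ℕ) ≤ tc ∧ (v.2 : ℕ) ≤ tc := by
  obtain ⟨hne, h | h⟩ := (SimpleGraph.fromRel_adj (strandRelF E n _ w) u v).mp h
  · obtain ⟨s, hF, hp, hq⟩ := strandRelF_layer E n h
    exact ⟨by omega, by omega⟩
  · obtain ⟨s, hF, hp, hq⟩ := strandRelF_layer E n h
    exact ⟨by omega, by omega⟩

lemma QF_suf_ge_layer {tc : ℕ} {w : Fin n → Finset V} {u v : V × Fin (n+1)}
    (h : (QF E n (fun s => ¬((s : ℕ) < tc)) w).Adj u v) :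
    tc ≤ (u.2 : ℕ) ∧ tc ≤ (v.2 : ℕ) := by
  obtain ⟨hne, h | h⟩ := (SimpleGraph.fromRel_adj (strandRelF E n _ w) u v).mp h
  · obtain ⟨s, hF, hp, hq⟩ := strandRelF_layer E n h
    exact ⟨by omega, by omega⟩
  · obtain ⟨s, hF, hp, hq⟩ := strandRelF_layer E n h
    exact ⟨by omega, by omega⟩

variable [DecidableEq V]

lemma unique_nonA (hE : ∀ e ∈ E, ∃ i j, i ∈ A ∧ j ∉ A ∧ e = {i, j})
    {e : Finset V} (he : e ∈ E) {a b : V} (ha : a ∈ e) (hb : b ∈ e)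
    (hna : a ∉ A) (hnb : b ∉ A) : a = b := by
  obtain ⟨i, j, hiA, hjA, rfl⟩ := hE e he
  rcases Finset.mem_insert.mp ha with rfl | ha'
  · exact absurd hiA hna
  · rcases Finset.mem_insert.mp hb with rfl | hb'
    · exact absurd hiA hnb
    · rw [Finset.mem_singleton] at ha' hb'
      rw [ha', hb']

lemma unique_inA (hE : ∀ e ∈ E, ∃ i j, i ∈ A ∧ j ∉ A ∧ e = {i, j})
    {e : Finset V} (he : e ∈ E) {a b : V} (ha : a ∈ e) (hb : b ∈ e)
    (hna : a ∈ A) (hnb : b ∈ A) : a = b := by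
  obtain ⟨i, j, hiA, hjA, rfl⟩ := hE e he
  have ha' : a = i := by
    rcases Finset.mem_insert.mp ha with h | h
    · exact h
    · rw [Finset.mem_singleton] at h
      rw [h] at hna
      exact absurd hna hjA
  have hb' : b = i := by
    rcases Finset.mem_insert.mp hb with h | h
    · exact h
    · rw [Finset.mem_singleton] at h
      rw [h] at hnb
      exact absurd hnb hjA
  rw [ha', hb']

def dirRel (F : Fin n → Prop) (w : Fin n → Finset V) (u v : V × Fin (n+1)) : Prop :=
  ∃ s : Fin n, F s ∧
    ((u.1 = v.1 ∧ u.1 ∈ A ∧ u.1 ∉ w s ∧ u.2 = Fin.castSucc s ∧ v.2 = Fin.succ s) ∨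
     (u.1 = v.1 ∧ u.1 ∉ A ∧ u.1 ∉ w s ∧ u.2 = Fin.succ s ∧ v.2 = Fin.castSucc s) ∨
     (u.1 ∈ A ∧ v.1 ∉ A ∧ u.1 ∈ w s ∧ v.1 ∈ w s ∧ u.2 = Fin.castSucc s ∧ v.2 = Fin.castSucc s) ∨
     (u.1 ∉ A ∧ v.1 ∈ A ∧ u.1 ∈ w s ∧ v.1 ∈ w s ∧ u.2 = Fin.succ s ∧ v.2 = Fin.succ s))

lemma adj_dir (hE : ∀ e ∈ E, ∃ i j, i ∈ A ∧ j ∉ A ∧ e = {i, j})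
    {F : Fin n → Prop} {w : Fin n → Finset V} (hw : ∀ s, w s ∈ E)
    {u v : V × Fin (n+1)} (h : (QF E n F w).Adj u v) :
    dirRel A n F w u v ∨ dirRel A n F w v u := by
  classical
  have main : ∀ p q : V × Fin (n+1), strandRelF E n F w p q →
      dirRel A n F w p q ∨ dirRel A n F w q p := by
    rintro p q ⟨s, hF, ⟨h1, h2, h3, h4⟩ | ⟨hsE, hp, hq, hne', hlay⟩⟩
    · by_cases hA : p.1 ∈ A
      · exact Or.inl ⟨s, hF, Or.inl ⟨h1, hA, h2, h3, h4⟩⟩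
      · refine Or.inr ⟨s, hF, Or.inr (Or.inl ⟨h1.symm, ?_, ?_, h4, h3⟩)⟩
        · rw [← h1]; exact hA
        · rw [← h1]; exact h2
    · obtain ⟨i, j, hiA, hjA, he⟩ := hE _ hsE
      have hp2 : p.1 = i ∨ p.1 = j := by
        have h' := hp; rw [he] at h'; simpa using h'
      have hq2 : q.1 = i ∨ q.1 = j := by
        have h' := hq; rw [he] at h'; simpa using h'
      rcases hp2 with hpi | hpj
      · have hqj : q.1 = j := by
          rcases hq2 with h' | h'
          · exact absurd (hpi.trans h'.symm) hne'
          · exact h'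
        have hpA : p.1 ∈ A := by rw [hpi]; exact hiA
        have hqA : q.1 ∉ A := by rw [hqj]; exact hjA
        rcases hlay with ⟨h3, h4⟩ | ⟨h3, h4⟩
        · exact Or.inl ⟨s, hF, Or.inr (Or.inr (Or.inl ⟨hpA, hqA, hp, hq, h3, h4⟩))⟩
        · exact Or.inr ⟨s, hF, Or.inr (Or.inr (Or.inr ⟨hqA, hpA, hq, hp, h4, h3⟩))⟩
      · have hqi : q.1 = i := by
          rcases hq2 with h' | h'
          · exact h'
          · exact absurd (hpj.trans h'.symm) hne'
        have hpA : p.1 ∉ A := by rw [hpj]; exact hjA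
        have hqA : q.1 ∈ A := by rw [hqi]; exact hiA
        rcases hlay with ⟨h3, h4⟩ | ⟨h3, h4⟩
        · exact Or.inr ⟨s, hF, Or.inr (Or.inr (Or.inl ⟨hqA, hpA, hq, hp, h4, h3⟩))⟩
        · exact Or.inl ⟨s, hF, Or.inr (Or.inr (Or.inr ⟨hpA, hqA, hp, hq, h3, h4⟩))⟩
  obtain ⟨hne, h | h⟩ := (SimpleGraph.fromRel_adj (strandRelF E n F w) u v).mp h
  · exact main u v h
  · exact (main v u h).symm

lemma dir_out_unique (hE : ∀ e ∈ E, ∃ i j, i ∈ A ∧ j ∉ A ∧ e = {i, j})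
    {F : Fin n → Prop} {w : Fin n → Finset V} (hw : ∀ s, w s ∈ E)
    {u v v' : V × Fin (n+1)}
    (h1 : dirRel A n F w u v) (h2 : dirRel A n F w u v') : v = v' := by
  obtain ⟨s, hFs, c1⟩ := h1
  obtain ⟨s', hFs', c2⟩ := h2
  rcases c1 with ⟨e1,e2,e3,e4,e5⟩|⟨e1,e2,e3,e4,e5⟩|⟨e1,e2,e3,e4,e5,e6⟩|⟨e1,e2,e3,e4,e5,e6⟩ <;>
    rcases c2 with ⟨f1,f2,f3,f4,f5⟩|⟨f1,f2,f3,f4,f5⟩|⟨f1,f2,f3,f4,f5,f6⟩|⟨f1,f2,f3,f4,f5,f6⟩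
  · have hss : s = s' := Fin.castSucc_inj.mp (e4.symm.trans f4)
    subst hss
    exact Prod.ext_iff.mpr ⟨e1.symm.trans f1, e5.trans f5.symm⟩
  · exact absurd e2 f2
  · have hss : s = s' := Fin.castSucc_inj.mp (e4.symm.trans f5)
    subst hss
    exact absurd f3 e3
  · exact absurd e2 f1
  · exact absurd f2 e2
  · have hss : s = s' := Fin.succ_inj.mp (e4.symm.trans f4)
    subst hss
    exact Prod.ext_iff.mpr ⟨e1.symm.trans f1, e5.trans f5.symm⟩
  · exact absurd f1 e2
  · have hss : s = s' := Fin.succ_inj.mp (e4.symm.trans f5)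
    subst hss
    exact absurd f3 e3
  · have hss : s = s' := Fin.castSucc_inj.mp (e5.symm.trans f4)
    subst hss
    exact absurd e3 f3
  · exact absurd e1 f2
  · have hss : s = s' := Fin.castSucc_inj.mp (e5.symm.trans f5)
    subst hss
    exact Prod.ext_iff.mpr ⟨unique_nonA A E hE (hw s) e4 f4 e2 f2, e6.trans f6.symm⟩
  · exact absurd e1 f1
  · exact absurd f2 e1
  · have hss : s = s' := Fin.succ_inj.mp (e5.symm.trans f4)
    subst hss
    exact absurd e3 f3
  · exact absurd f1 e1
  · have hss : s = s' := Fin.succ_inj.mp (e5.symm.trans f5)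
    subst hss
    exact Prod.ext_iff.mpr ⟨unique_inA A E hE (hw s) e4 f4 e2 f2, e6.trans f6.symm⟩

lemma dir_in_unique (hE : ∀ e ∈ E, ∃ i j, i ∈ A ∧ j ∉ A ∧ e = {i, j})
    {F : Fin n → Prop} {w : Fin n → Finset V} (hw : ∀ s, w s ∈ E)
    {u v v' : V × Fin (n+1)}
    (h1 : dirRel A n F w v u) (h2 : dirRel A n F w v' u) : v = v' := by
  obtain ⟨s, hFs, c1⟩ := h1
  obtain ⟨s', hFs', c2⟩ := h2
  rcases c1 with ⟨e1,e2,e3,e4,e5⟩|⟨e1,e2,e3,e4,e5⟩|⟨e1,e2,e3,e4,e5,e6⟩|⟨e1,e2,e3,e4,e5,e6⟩ <;>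
    rcases c2 with ⟨f1,f2,f3,f4,f5⟩|⟨f1,f2,f3,f4,f5⟩|⟨f1,f2,f3,f4,f5,f6⟩|⟨f1,f2,f3,f4,f5,f6⟩
  · have hss : s = s' := Fin.succ_inj.mp (e5.symm.trans f5)
    subst hss
    exact Prod.ext_iff.mpr ⟨e1.trans f1.symm, e4.trans f4.symm⟩
  · exact absurd (e1 ▸ e2) (f1 ▸ f2)
  · exact absurd (e1 ▸ e2) f2
  · have hss : s = s' := Fin.succ_inj.mp (e5.symm.trans f6)
    subst hss
    exact absurd f4 (e1 ▸ e3)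
  · exact absurd (f1 ▸ f2) (e1 ▸ e2)
  · have hss : s = s' := Fin.castSucc_inj.mp (e5.symm.trans f5)
    subst hss
    exact Prod.ext_iff.mpr ⟨e1.trans f1.symm, e4.trans f4.symm⟩
  · have hss : s = s' := Fin.castSucc_inj.mp (e5.symm.trans f6)
    subst hss
    exact absurd f4 (e1 ▸ e3)
  · exact absurd f2 (e1 ▸ e2)
  · exact absurd (f1 ▸ f2) e2
  · have hss : s = s' := Fin.castSucc_inj.mp (e6.symm.trans f5)
    subst hss
    exact absurd e4 (f1 ▸ f3)
  · have hss : s = s' := Fin.castSucc_inj.mp (e6.symm.trans f6)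
    subst hss
    exact Prod.ext_iff.mpr ⟨unique_inA A E hE (hw s) e3 f3 e1 f1, e5.trans f5.symm⟩
  · exact absurd f2 e2
  · have hss : s = s' := Fin.succ_inj.mp (e6.symm.trans f5)
    subst hss
    exact absurd e4 (f1 ▸ f3)
  · exact absurd e2 (f1 ▸ f2)
  · exact absurd e2 f2
  · have hss : s = s' := Fin.succ_inj.mp (e6.symm.trans f6)
    subst hss
    exact Prod.ext_iff.mpr ⟨unique_nonA A E hE (hw s) e3 f3 e1 f1, e5.trans f5.symm⟩

lemma no_dir_out_A {F : Fin n → Prop} {w : Fin n → Finset V} {c : Fin (n+1)}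
    (hF : ∀ s : Fin n, F s → (s : ℕ) ≠ (c : ℕ)) {i : V} (hiA : i ∈ A)
    (v : V × Fin (n+1)) : ¬ dirRel A n F w (i, c) v := by
  rintro ⟨s, hFs, ⟨e1,e2,e3,e4,e5⟩|⟨e1,e2,e3,e4,e5⟩|⟨e1,e2,e3,e4,e5,e6⟩|⟨e1,e2,e3,e4,e5,e6⟩⟩
  · have h := congrArg Fin.val e4
    rw [Fin.coe_castSucc] at h
    exact hF s hFs h.symm
  · exact e2 hiA
  · have h := congrArg Fin.val e5
    rw [Fin.coe_castSucc] at h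
    exact hF s hFs h.symm
  · exact e1 hiA

lemma no_dir_in_B {F : Fin n → Prop} {w : Fin n → Finset V} {c : Fin (n+1)}
    (hF : ∀ s : Fin n, F s → (s : ℕ) ≠ (c : ℕ)) {i : V} (hiB : i ∉ A)
    (v : V × Fin (n+1)) : ¬ dirRel A n F w v (i, c) := by
  rintro ⟨s, hFs, ⟨e1,e2,e3,e4,e5⟩|⟨e1,e2,e3,e4,e5⟩|⟨e1,e2,e3,e4,e5,e6⟩|⟨e1,e2,e3,e4,e5,e6⟩⟩
  · have h1 : v.1 = i := e1
    exact hiB (h1 ▸ e2)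
  · have h := congrArg Fin.val e5
    rw [Fin.coe_castSucc] at h
    exact hF s hFs h.symm
  · have h := congrArg Fin.val e6
    rw [Fin.coe_castSucc] at h
    exact hF s hFs h.symm
  · exact hiB e2

lemma no_dir_in_A {F : Fin n → Prop} {w : Fin n → Finset V} {c : Fin (n+1)}
    (hF : ∀ s : Fin n, F s → (s : ℕ) + 1 ≠ (c : ℕ)) {i : V} (hiA : i ∈ A)
    (v : V × Fin (n+1)) : ¬ dirRel A n F w v (i, c) := by
  rintro ⟨s, hFs, ⟨e1,e2,e3,e4,e5⟩|⟨e1,e2,e3,e4,e5⟩|⟨e1,e2,e3,e4,e5,e6⟩|⟨e1,e2,e3,e4,e5,e6⟩⟩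
  · have h := congrArg Fin.val e5
    rw [Fin.val_succ] at h
    exact hF s hFs h.symm
  · have h1 : v.1 = i := e1
    exact (h1 ▸ e2) hiA
  · exact e2 hiA
  · have h := congrArg Fin.val e6
    rw [Fin.val_succ] at h
    exact hF s hFs h.symm

lemma no_dir_out_B {F : Fin n → Prop} {w : Fin n → Finset V} {c : Fin (n+1)}
    (hF : ∀ s : Fin n, F s → (s : ℕ) + 1 ≠ (c : ℕ)) {i : V} (hiB : i ∉ A)
    (v : V × Fin (n+1)) : ¬ dirRel A n F w (i, c) v := by
  rintro ⟨s, hFs, ⟨e1,e2,e3,e4,e5⟩|⟨e1,e2,e3,e4,e5⟩|⟨e1,e2,e3,e4,e5,e6⟩|⟨e1,e2,e3,e4,e5,e6⟩⟩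
  · exact hiB e2
  · have h := congrArg Fin.val e4
    rw [Fin.val_succ] at h
    exact hF s hFs h.symm
  · exact hiB e1
  · have h := congrArg Fin.val e5
    rw [Fin.val_succ] at h
    exact hF s hFs h.symm

lemma not_reach_same_side_cast (hE : ∀ e ∈ E, ∃ i j, i ∈ A ∧ j ∉ A ∧ e = {i, j})
    {F : Fin n → Prop} {w : Fin n → Finset V} (hw : ∀ s, w s ∈ E) {c : Fin (n+1)}
    (hF : ∀ s : Fin n, F s → (s : ℕ) ≠ (c : ℕ))
    {i j : V} (hij : i ≠ j) (hside : i ∈ A ↔ j ∈ A)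
    (h : (QF E n F w).Reachable (i, c) (j, c)) : False := by
  by_cases hiA : i ∈ A
  · have hjA : j ∈ A := hside.mp hiA
    have heq := eq_of_reachable_sinks
      (fun u v h' => adj_dir A E n hE hw h')
      (fun u v v' a b => dir_out_unique A E n hE hw a b)
      (no_dir_out_A A n hF hiA) (no_dir_out_A A n hF hjA) h
    exact hij (congrArg Prod.fst heq)
  · have hjA : j ∉ A := fun h' => hiA (hside.mpr h')
    have heq := eq_of_reachable_sinks (D := fun u v => dirRel A n F w v u)
      (fun u v h' => (adj_dir A E n hE hw h').symm)
      (fun u v v' a b => dir_in_unique A E n hE hw a b)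
      (no_dir_in_B A n hF hiA) (no_dir_in_B A n hF hjA) h
    exact hij (congrArg Prod.fst heq)

lemma not_reach_same_side_succ (hE : ∀ e ∈ E, ∃ i j, i ∈ A ∧ j ∉ A ∧ e = {i, j})
    {F : Fin n → Prop} {w : Fin n → Finset V} (hw : ∀ s, w s ∈ E) {c : Fin (n+1)}
    (hF : ∀ s : Fin n, F s → (s : ℕ) + 1 ≠ (c : ℕ))
    {i j : V} (hij : i ≠ j) (hside : i ∈ A ↔ j ∈ A)
    (h : (QF E n F w).Reachable (i, c) (j, c)) : False := by
  by_cases hiA : i ∈ A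
  · have hjA : j ∈ A := hside.mp hiA
    have heq := eq_of_reachable_sinks (D := fun u v => dirRel A n F w v u)
      (fun u v h' => (adj_dir A E n hE hw h').symm)
      (fun u v v' a b => dir_in_unique A E n hE hw a b)
      (no_dir_in_A A n hF hiA) (no_dir_in_A A n hF hjA) h
    exact hij (congrArg Prod.fst heq)
  · have hjA : j ∉ A := fun h' => hiA (hside.mpr h')
    have heq := eq_of_reachable_sinks
      (fun u v h' => adj_dir A E n hE hw h')
      (fun u v v' a b => dir_out_unique A E n hE hw a b)
      (no_dir_out_B A n hF hiA) (no_dir_out_B A n hF hjA) h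
    exact hij (congrArg Prod.fst heq)

end Strand

section Count
variable {V : Type*} [Fintype V] [DecidableEq V]

lemma cross_card_add_one_le {m : ℕ} (G : SimpleGraph (V × Fin (m+1))) (c : Fin (m+1))
    {a b : V} (hab : a ≠ b)
    (hadj : G.connectedComponentMk ((a, c) : V × Fin (m+1)) = G.connectedComponentMk (b, c)) :
    Nat.card {C : G.ConnectedComponent // ∃ v, v.2 = c ∧ G.connectedComponentMk v = C} + 1 ≤
      Fintype.card V := by
  classical
  have hsurj : Function.Surjective (fun (i : {i : V // i ≠ b}) =>
      (⟨G.connectedComponentMk (i.1, c), ⟨(i.1, c), rfl, rfl⟩⟩ :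
        {C : G.ConnectedComponent // ∃ v, v.2 = c ∧ G.connectedComponentMk v = C})) := by
    rintro ⟨C, v, hv, hC⟩
    have hvv : v = (v.1, c) := Prod.ext_iff.mpr ⟨rfl, hv⟩
    by_cases hb : v.1 = b
    · refine ⟨⟨a, hab⟩, ?_⟩
      apply Subtype.ext
      show G.connectedComponentMk (a, c) = C
      rw [hadj, ← hb, ← hvv]
      exact hC
    · refine ⟨⟨v.1, hb⟩, ?_⟩
      apply Subtype.ext
      show G.connectedComponentMk (v.1, c) = C
      rw [← hvv]
      exact hC
  have h1 := Nat.card_le_card_of_surjective _ hsurj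
  have h2 : Nat.card {i : V // i ≠ b} + 1 = Fintype.card V := by
    rw [Nat.card_eq_fintype_card, Fintype.card_subtype]
    have hfe : Finset.univ.filter (fun i : V => i ≠ b) = Finset.univ.erase b := by
      ext i
      simp [Finset.mem_erase, Finset.mem_filter, and_comm]
    rw [hfe, Finset.card_erase_of_mem (Finset.mem_univ b), Finset.card_univ]
    have hpos : 0 < Fintype.card V := Fintype.card_pos_iff.mpr ⟨b⟩
    omega
  omega

noncomputable def partner {V : Type*} (rel : V → V → Prop) (α : V) : V :=
  @dite _ (∃ b, rel α b ∧ b ≠ α) (Classical.dec _) (fun h => h.choose) (fun _ => α)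

lemma partner_spec {V : Type*} {rel : V → V → Prop} {α : V}
    (hex : ∃ b, rel α b ∧ b ≠ α) :
    rel α (partner rel α) ∧ partner rel α ≠ α := by
  unfold partner
  rw [dif_pos hex]
  exact hex.choose_spec

lemma partner_eq_self {V : Type*} {rel : V → V → Prop} {α : V}
    (hnex : ¬ ∃ b, rel α b ∧ b ≠ α) : partner rel α = α := by
  unfold partner
  rw [dif_neg hnex]

set_option maxHeartbeats 1600000 in
lemma card_le_cross_card {m : ℕ} (A : Finset V)
    {G Q R : SimpleGraph (V × Fin (m+1))} (c : Fin (m+1))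
    {s1 s2 : V × Fin (m+1) → Prop}
    (hsplit : ∀ u v, G.Adj u v → Q.Adj u v ∨ R.Adj u v)
    (htri : ∀ v, v.2 = c ∨ s1 v ∨ s2 v)
    (hQ : ∀ u v, Q.Adj u v → ¬ s2 u ∧ ¬ s2 v)
    (hR : ∀ u v, R.Adj u v → ¬ s1 u ∧ ¬ s1 v)
    (hQG : ∀ u v, Q.Adj u v → G.Adj u v)
    (hRG : ∀ u v, R.Adj u v → G.Adj u v)
    (hQside : ∀ i j : V, i ≠ j → (i ∈ A ↔ j ∈ A) →
      ¬ Q.Reachable ((i, c) : V × Fin (m+1)) (j, c))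
    (hRside : ∀ i j : V, i ≠ j → (i ∈ A ↔ j ∈ A) →
      ¬ R.Reachable ((i, c) : V × Fin (m+1)) (j, c)) :
    Fintype.card V ≤
      Nat.card {C : G.ConnectedComponent // ∃ v, v.2 = c ∧ G.connectedComponentMk v = C} +
        2 * A.card := by
  classical
  have hQG' : Q ≤ G := fun u v h => hQG u v h
  have hRG' : R ≤ G := fun u v h => hRG u v h
  let L : List (V × V) :=
    (A.toList.map fun α =>
      (α, partner (fun i j => Q.Reachable ((i, c) : V × Fin (m+1)) (j, c)) α)) ++
    (A.toList.map fun α =>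
      (α, partner (fun i j => R.Reachable ((i, c) : V × Fin (m+1)) (j, c)) α))
  have hLlen : L.length = 2 * A.card := by
    simp only [L, List.length_append, List.length_map, Finset.length_toList]
    omega
  have bridge : ∀ (rel : V → V → Prop),
      (∀ {i j}, rel i j → rel j i) →
      (∀ {i j k}, rel i j → rel j k → rel i k) →
      (∀ i j : V, i ≠ j → (i ∈ A ↔ j ∈ A) → ¬ rel i j) →
      (∀ α ∈ A, (α, partner rel α) ∈ L) →
      ∀ i j, rel i j → Relation.EqvGen (pairRel L) i j := by
    intro rel hsymm htrans hside hmem i j hrel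
    by_cases hij : i = j
    · rw [hij]; exact Relation.EqvGen.refl j
    have hnotiff : ¬ (i ∈ A ↔ j ∈ A) := fun hiff => hside i j hij hiff hrel
    by_cases hiA : i ∈ A
    · have hjA : j ∉ A := fun hj => hnotiff ⟨fun _ => hj, fun _ => hiA⟩
      have hex : ∃ b, rel i b ∧ b ≠ i := ⟨j, hrel, Ne.symm hij⟩
      have hsp := partner_spec hex
      have hpi : partner rel i = j := by
        have hbA : partner rel i ∉ A := fun hbA' =>
          hside i (partner rel i) (Ne.symm hsp.2) ⟨fun _ => hbA', fun _ => hiA⟩ hsp.1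
        by_contra hne
        exact hside (partner rel i) j hne (iff_of_false hbA hjA)
          (htrans (hsymm hsp.1) hrel)
      exact Relation.EqvGen.rel _ _ ⟨(i, partner rel i), hmem i hiA, Or.inl (by rw [hpi])⟩
    · have hjA : j ∈ A := by
        by_contra hj
        exact hnotiff ⟨fun hi => absurd hi hiA, fun hj' => absurd hj' hj⟩
      have hex : ∃ b, rel j b ∧ b ≠ j := ⟨i, hsymm hrel, hij⟩
      have hsp := partner_spec hex
      have hpj : partner rel j = i := by
        have hbA : partner rel j ∉ A := fun hbA' =>
          hside j (partner rel j) (Ne.symm hsp.2) ⟨fun _ => hbA', fun _ => hjA⟩ hsp.1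
        by_contra hne
        exact hside (partner rel j) i hne (iff_of_false hbA hiA)
          (htrans (hsymm hsp.1) (hsymm hrel))
      exact Relation.EqvGen.rel _ _ ⟨(j, partner rel j), hmem j hjA, Or.inr (by rw [hpj])⟩
  have hmem_a : ∀ α ∈ A,
      (α, partner (fun i j => Q.Reachable ((i, c) : V × Fin (m+1)) (j, c)) α) ∈ L := by
    intro α hα
    exact List.mem_append.mpr (Or.inl (List.mem_map.mpr ⟨α, Finset.mem_toList.mpr hα, rfl⟩))
  have hmem_c : ∀ α ∈ A,
      (α, partner (fun i j => R.Reachable ((i, c) : V × Fin (m+1)) (j, c)) α) ∈ L := by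
    intro α hα
    exact List.mem_append.mpr (Or.inr (List.mem_map.mpr ⟨α, Finset.mem_toList.mpr hα, rfl⟩))
  have bridge_a : ∀ i j, Q.Reachable ((i, c) : V × Fin (m+1)) (j, c) →
      Relation.EqvGen (pairRel L) i j :=
    bridge (fun i j => Q.Reachable ((i, c) : V × Fin (m+1)) (j, c))
      (fun h => h.symm) (fun h1 h2 => h1.trans h2) hQside hmem_a
  have bridge_c : ∀ i j, R.Reachable ((i, c) : V × Fin (m+1)) (j, c) →
      Relation.EqvGen (pairRel L) i j :=
    bridge (fun i j => R.Reachable ((i, c) : V × Fin (m+1)) (j, c))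
      (fun h => h.symm) (fun h1 h2 => h1.trans h2) hRside hmem_c
  have htrace : ∀ i j : V,
      G.connectedComponentMk ((i, c) : V × Fin (m+1)) = G.connectedComponentMk (j, c) →
      Relation.EqvGen (pairRel L) i j := by
    intro i j hC
    have hreach : G.Reachable ((i, c) : V × Fin (m+1)) (j, c) := ConnectedComponent.eq.mp hC
    have h1 := trace_eqvGen (mid := fun v => v.2 = c) hsplit htri hQ hR rfl rfl hreach
    refine eqvGen_lift (p := pairRel L) Prod.fst ?_ h1
    rintro ⟨a1, a2⟩ ⟨b1, b2⟩ ⟨⟨ha, hb⟩, hr | hr⟩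
    · have ha' : ((a1, a2) : V × Fin (m+1)) = (a1, c) := Prod.ext_iff.mpr ⟨rfl, ha⟩
      have hb' : ((b1, b2) : V × Fin (m+1)) = (b1, c) := Prod.ext_iff.mpr ⟨rfl, hb⟩
      rw [ha', hb'] at hr
      exact bridge_a a1 b1 hr
    · have ha' : ((a1, a2) : V × Fin (m+1)) = (a1, c) := Prod.ext_iff.mpr ⟨rfl, ha⟩
      have hb' : ((b1, b2) : V × Fin (m+1)) = (b1, c) := Prod.ext_iff.mpr ⟨rfl, hb⟩
      rw [ha', hb'] at hr
      exact bridge_c a1 b1 hr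
  have hwd : ∀ i j, pairRel L i j →
      G.connectedComponentMk ((i, c) : V × Fin (m+1)) = G.connectedComponentMk (j, c) := by
    intro i j hp
    obtain ⟨p, hpL, hpe⟩ := hp
    have hkey : G.Reachable ((p.1, c) : V × Fin (m+1)) (p.2, c) := by
      rcases List.mem_append.mp hpL with hmem | hmem
      · obtain ⟨α, hαA, rfl⟩ := List.mem_map.mp hmem
        dsimp only
        by_cases hex : ∃ b, Q.Reachable ((α, c) : V × Fin (m+1)) (b, c) ∧ b ≠ α
        · exact Reachable.mono hQG'
            (partner_spec (rel := fun i j => Q.Reachable ((i, c) : V × Fin (m+1)) (j, c)) hex).1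
        · rw [partner_eq_self hex]
      · obtain ⟨α, hαA, rfl⟩ := List.mem_map.mp hmem
        dsimp only
        by_cases hex : ∃ b, R.Reachable ((α, c) : V × Fin (m+1)) (b, c) ∧ b ≠ α
        · exact Reachable.mono hRG'
            (partner_spec (rel := fun i j => R.Reachable ((i, c) : V × Fin (m+1)) (j, c)) hex).1
        · rw [partner_eq_self hex]
    rcases hpe with rfl | rfl
    · exact ConnectedComponent.sound hkey
    · exact ConnectedComponent.sound hkey.symm
  have hinj : Function.Injective (Quot.lift
      (fun i : V =>
        (⟨G.connectedComponentMk ((i, c) : V × Fin (m+1)), ⟨(i, c), rfl, rfl⟩⟩ :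
          {C : G.ConnectedComponent // ∃ v, v.2 = c ∧ G.connectedComponentMk v = C}))
      (fun i j hp => Subtype.ext (hwd i j hp))) := by
    intro q q' h
    obtain ⟨i, rfl⟩ := Quot.exists_rep q
    obtain ⟨j, rfl⟩ := Quot.exists_rep q'
    have h' : G.connectedComponentMk ((i, c) : V × Fin (m+1)) =
        G.connectedComponentMk (j, c) := congrArg Subtype.val h
    exact Quot.eqvGen_sound (htrace i j h')
  have h1 := Nat.card_le_card_of_injective _ hinj
  have h2 := card_le_card_quot_pairRel (α := V) L
  rw [hLlen] at h2
  rw [Nat.card_eq_fintype_card (α := V)] at h2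
  omega

end Count

end EncodingAFM

open EncodingAFM

/-- Encoding inequality for the left-to-right canonical paths in the
purely antiferromagnetic case: for configurations `x, y` and a cut position
`t ∈ {1,…,2B}`, the hybrid configurations `z = (y_1,…,y_{t−1},x_t,…,x_{2B})` and
`η = (x_1,…,x_{t−1},y_t,…,y_{2B})` satisfy
`L(x) + L(y) ≤ L(z) + L(η) + 4|𝒜| − 2`, equivalently
`2^{L(x)}·2^{L(y)} ≤ 2^{4|𝒜|−2}·2^{L(z)}·2^{L(η)}`. -/
theorem encoding_inequality_AFM [Fintype V] [DecidableEq V]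
    (A : Finset V) (E : Finset (Finset V))
    (hE : ∀ e ∈ E, ∃ i j : V, i ∈ A ∧ j ∉ A ∧ e = {i, j})
    (hA : 1 ≤ A.card) (hAB : A.card ≤ Aᶜ.card)
    (B : ℕ) (hB : 0 < B)
    (x y : Fin (2 * B) → Finset V) (hx : ∀ t, x t ∈ E) (hy : ∀ t, y t ∈ E)
    (t : ℕ) (ht1 : 1 ≤ t) (ht2 : t ≤ 2 * B) :
    numLoops E ∅ (2 * B) x + numLoops E ∅ (2 * B) y ≤
      numLoops E ∅ (2 * B) (fun s => if (s : ℕ) + 1 < t then y s else x s) +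
      numLoops E ∅ (2 * B) (fun s => if (s : ℕ) + 1 < t then x s else y s) +
      (4 * A.card - 2) ∧
    2 ^ numLoops E ∅ (2 * B) x * 2 ^ numLoops E ∅ (2 * B) y ≤
      2 ^ (4 * A.card - 2) *
        (2 ^ numLoops E ∅ (2 * B) (fun s => if (s : ℕ) + 1 < t then y s else x s) *
         2 ^ numLoops E ∅ (2 * B) (fun s => if (s : ℕ) + 1 < t then x s else y s)) := by
  classical
  by_cases htlt : t < 2
  · have hzeq : (fun s : Fin (2*B) => if (s : ℕ) + 1 < t then y s else x s) = x := by
      funext s; rw [if_neg (by omega)]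
    have heeq : (fun s : Fin (2*B) => if (s : ℕ) + 1 < t then x s else y s) = y := by
      funext s; rw [if_neg (by omega)]
    rw [hzeq, heeq]
    refine ⟨Nat.le_add_right _ _, ?_⟩
    have h1 : 1 ≤ 2 ^ (4 * A.card - 2) := Nat.one_le_two_pow
    have h2 := Nat.mul_le_mul_right
      (2 ^ numLoops E ∅ (2*B) x * 2 ^ numLoops E ∅ (2*B) y) h1
    rw [one_mul] at h2
    exact h2
  · push_neg at htlt
    have hc : t - 1 < 2*B + 1 := by omega
    obtain ⟨Tm, hTmval⟩ : ∃ Tm : Fin (2*B+1), (Tm : ℕ) = t - 1 := ⟨⟨t-1, hc⟩, rfl⟩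
    have hzE : ∀ s : Fin (2*B), (if (s : ℕ) + 1 < t then y s else x s) ∈ E := by
      intro s; split
      · exact hy s
      · exact hx s
    have heE : ∀ s : Fin (2*B), (if (s : ℕ) + 1 < t then x s else y s) ∈ E := by
      intro s; split
      · exact hx s
      · exact hy s
    -- decomposition of the loop count for an arbitrary configuration
    have main : ∀ w : Fin (2*B) → Finset V, (∀ s, w s ∈ E) →
        numLoops E ∅ (2*B) w =
          Nat.card {C : (strandGraph E ∅ (2*B) w).ConnectedComponent //
            ∃ v, v.2 = Tm ∧ (strandGraph E ∅ (2*B) w).connectedComponentMk v = C} +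
          Nat.card {D : (QF E (2*B) (fun s => (s:ℕ) < t-1) w).ConnectedComponent //
            ∀ v, (QF E (2*B) (fun s => (s:ℕ) < t-1) w).connectedComponentMk v = D →
              (v.2:ℕ) < t-1} +
          Nat.card {D : (QF E (2*B) (fun s => ¬((s:ℕ) < t-1)) w).ConnectedComponent //
            ∀ v, (QF E (2*B) (fun s => ¬((s:ℕ) < t-1)) w).connectedComponentMk v = D →
              t-1 < (v.2:ℕ)} := by
      intro w hw
      have hsplit : ∀ u v : V × Fin (2*B+1), (strandGraph E ∅ (2*B) w).Adj u v →
          (QF E (2*B) (fun s => (s:ℕ) < t-1) w).Adj u v ∨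
          (QF E (2*B) (fun s => ¬((s:ℕ) < t-1)) w).Adj u v :=
        fun u v h => strandGraph_adj_split E (2*B) (t-1) w h
      have htri : ∀ v : V × Fin (2*B+1), v.2 = Tm ∨ (v.2:ℕ) < t-1 ∨ t-1 < (v.2:ℕ) := by
        intro v
        rcases lt_trichotomy ((v.2 : ℕ)) (t-1) with h | h | h
        · exact Or.inr (Or.inl h)
        · refine Or.inl (Fin.val_injective ?_)
          rw [hTmval]
          exact h
        · exact Or.inr (Or.inr h)
      have hm1 : ∀ v : V × Fin (2*B+1), v.2 = Tm → ¬ ((v.2:ℕ) < t-1) := by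
        intro v hv; rw [hv]; omega
      have hm2 : ∀ v : V × Fin (2*B+1), v.2 = Tm → ¬ (t-1 < (v.2:ℕ)) := by
        intro v hv; rw [hv]; omega
      have h12 : ∀ v : V × Fin (2*B+1), (v.2:ℕ) < t-1 → ¬ (t-1 < (v.2:ℕ)) := by
        intro v hv; omega
      have hQl : ∀ u v : V × Fin (2*B+1),
          (QF E (2*B) (fun s => (s:ℕ) < t-1) w).Adj u v →
          ¬ (t-1 < (u.2:ℕ)) ∧ ¬ (t-1 < (v.2:ℕ)) := by
        intro u v h
        have h' := QF_pre_le_layer E (2*B) h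
        exact ⟨by omega, by omega⟩
      have hRl : ∀ u v : V × Fin (2*B+1),
          (QF E (2*B) (fun s => ¬((s:ℕ) < t-1)) w).Adj u v →
          ¬ ((u.2:ℕ) < t-1) ∧ ¬ ((v.2:ℕ) < t-1) := by
        intro u v h
        have h' := QF_suf_ge_layer E (2*B) h
        exact ⟨by omega, by omega⟩
      have hQG : ∀ u v : V × Fin (2*B+1),
          (QF E (2*B) (fun s => (s:ℕ) < t-1) w).Adj u v →
          (strandGraph E ∅ (2*B) w).Adj u v := fun u v h => QF_le E (2*B) _ w h
      have hRG : ∀ u v : V × Fin (2*B+1),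
          (QF E (2*B) (fun s => ¬((s:ℕ) < t-1)) w).Adj u v →
          (strandGraph E ∅ (2*B) w).Adj u v := fun u v h => QF_le E (2*B) _ w h
      have e0 := card_cc_decomp hsplit htri hm1 hm2 h12 hQl hRl
      have e1 := card_pure_eq hsplit hQG hRl
      have e2 := card_pure_eq (fun u v h => (hsplit u v h).symm) hRG hQl
      show Nat.card (strandGraph E ∅ (2*B) w).ConnectedComponent = _
      rw [e0, e1, e2]
    -- lower bound for the number of crossing components
    have lower : ∀ w : Fin (2*B) → Finset V, (∀ s, w s ∈ E) →
        Fintype.card V ≤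
          Nat.card {C : (strandGraph E ∅ (2*B) w).ConnectedComponent //
            ∃ v, v.2 = Tm ∧ (strandGraph E ∅ (2*B) w).connectedComponentMk v = C} +
          2 * A.card := by
      intro w hw
      have hsplit : ∀ u v : V × Fin (2*B+1), (strandGraph E ∅ (2*B) w).Adj u v →
          (QF E (2*B) (fun s => (s:ℕ) < t-1) w).Adj u v ∨
          (QF E (2*B) (fun s => ¬((s:ℕ) < t-1)) w).Adj u v :=
        fun u v h => strandGraph_adj_split E (2*B) (t-1) w h
      have htri : ∀ v : V × Fin (2*B+1), v.2 = Tm ∨ (v.2:ℕ) < t-1 ∨ t-1 < (v.2:ℕ) := by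
        intro v
        rcases lt_trichotomy ((v.2 : ℕ)) (t-1) with h | h | h
        · exact Or.inr (Or.inl h)
        · refine Or.inl (Fin.val_injective ?_)
          rw [hTmval]
          exact h
        · exact Or.inr (Or.inr h)
      have hQl : ∀ u v : V × Fin (2*B+1),
          (QF E (2*B) (fun s => (s:ℕ) < t-1) w).Adj u v →
          ¬ (t-1 < (u.2:ℕ)) ∧ ¬ (t-1 < (v.2:ℕ)) := by
        intro u v h
        have h' := QF_pre_le_layer E (2*B) h
        exact ⟨by omega, by omega⟩
      have hRl : ∀ u v : V × Fin (2*B+1),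
          (QF E (2*B) (fun s => ¬((s:ℕ) < t-1)) w).Adj u v →
          ¬ ((u.2:ℕ) < t-1) ∧ ¬ ((v.2:ℕ) < t-1) := by
        intro u v h
        have h' := QF_suf_ge_layer E (2*B) h
        exact ⟨by omega, by omega⟩
      have hQG : ∀ u v : V × Fin (2*B+1),
          (QF E (2*B) (fun s => (s:ℕ) < t-1) w).Adj u v →
          (strandGraph E ∅ (2*B) w).Adj u v := fun u v h => QF_le E (2*B) _ w h
      have hRG : ∀ u v : V × Fin (2*B+1),
          (QF E (2*B) (fun s => ¬((s:ℕ) < t-1)) w).Adj u v →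
          (strandGraph E ∅ (2*B) w).Adj u v := fun u v h => QF_le E (2*B) _ w h
      have hQside : ∀ i j : V, i ≠ j → (i ∈ A ↔ j ∈ A) →
          ¬ (QF E (2*B) (fun s => (s:ℕ) < t-1) w).Reachable
            ((i, Tm) : V × Fin (2*B+1)) (j, Tm) := by
        intro i j hij hiff hre
        exact not_reach_same_side_cast A E (2*B) hE hw
          (fun s hs => by omega) hij hiff hre
      have hRside : ∀ i j : V, i ≠ j → (i ∈ A ↔ j ∈ A) →
          ¬ (QF E (2*B) (fun s => ¬((s:ℕ) < t-1)) w).Reachable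
            ((i, Tm) : V × Fin (2*B+1)) (j, Tm) := by
        intro i j hij hiff hre
        exact not_reach_same_side_succ A E (2*B) hE hw
          (fun s hs => by omega) hij hiff hre
      exact card_le_cross_card A Tm hsplit htri hQl hRl hQG hRG hQside hRside
    have dxx := main x hx
    have dyy := main y hy
    have dzz := main (fun s => if (s : ℕ) + 1 < t then y s else x s) hzE
    have dee := main (fun s => if (s : ℕ) + 1 < t then x s else y s) heE
    -- identify the half graphs of the hybrid configurations
    have hQeq : ∀ (w1 w2 : Fin (2*B) → Finset V) (F : Fin (2*B) → Prop),
        (∀ s, F s → w1 s = w2 s) → QF E (2*B) F w1 = QF E (2*B) F w2 := by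
      intro w1 w2 F hF12
      have hrel : strandRelF E (2*B) F w1 = strandRelF E (2*B) F w2 := by
        funext p q
        apply propext
        constructor
        · rintro ⟨s, hFs, h⟩
          refine ⟨s, hFs, ?_⟩
          rwa [hF12 s hFs] at h
        · rintro ⟨s, hFs, h⟩
          refine ⟨s, hFs, ?_⟩
          rwa [← hF12 s hFs] at h
      unfold QF
      rw [hrel]
    have hQzy : QF E (2*B) (fun s => (s:ℕ) < t-1)
        (fun s => if (s : ℕ) + 1 < t then y s else x s) =
        QF E (2*B) (fun s => (s:ℕ) < t-1) y :=
      hQeq _ y _ (fun s hs => if_pos (by omega))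
    have hRzx : QF E (2*B) (fun s => ¬((s:ℕ) < t-1))
        (fun s => if (s : ℕ) + 1 < t then y s else x s) =
        QF E (2*B) (fun s => ¬((s:ℕ) < t-1)) x :=
      hQeq _ x _ (fun s hs => if_neg (by omega))
    have hQex : QF E (2*B) (fun s => (s:ℕ) < t-1)
        (fun s => if (s : ℕ) + 1 < t then x s else y s) =
        QF E (2*B) (fun s => (s:ℕ) < t-1) x :=
      hQeq _ x _ (fun s hs => if_pos (by omega))
    have hRey : QF E (2*B) (fun s => ¬((s:ℕ) < t-1))
        (fun s => if (s : ℕ) + 1 < t then x s else y s) =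
        QF E (2*B) (fun s => ¬((s:ℕ) < t-1)) y :=
      hQeq _ y _ (fun s hs => if_neg (by omega))
    rw [hQzy, hRzx] at dzz
    rw [hQex, hRey] at dee
    -- upper bounds for the crossing counts of x and y
    have hs0 : t - 2 < 2*B := by omega
    obtain ⟨a0, b0, ha0, hb0, he0⟩ := hE _ (hx ⟨t-2, hs0⟩)
    have ha0b0 : a0 ≠ b0 := fun h => hb0 (h ▸ ha0)
    have hadjx : (strandGraph E ∅ (2*B) x).connectedComponentMk
        ((a0, Tm) : V × Fin (2*B+1)) =
        (strandGraph E ∅ (2*B) x).connectedComponentMk (b0, Tm) := by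
      apply ConnectedComponent.sound
      apply SimpleGraph.Adj.reachable
      apply (SimpleGraph.fromRel_adj (strandRel E ∅ (2*B) x) _ _).mpr
      refine ⟨fun h => ha0b0 (congrArg Prod.fst h),
        Or.inl ⟨⟨t-2, hs0⟩, Or.inr (Or.inl ⟨hx _, ?_, ?_, ha0b0, Or.inr ⟨?_, ?_⟩⟩)⟩⟩
      · rw [he0]; exact Finset.mem_insert_self _ _
      · rw [he0]; exact Finset.mem_insert.mpr (Or.inr (Finset.mem_singleton_self _))
      · apply Fin.val_injective
        rw [Fin.val_succ]
        show (Tm : ℕ) = t - 2 + 1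
        omega
      · apply Fin.val_injective
        rw [Fin.val_succ]
        show (Tm : ℕ) = t - 2 + 1
        omega
    have crx := cross_card_add_one_le (strandGraph E ∅ (2*B) x) Tm ha0b0 hadjx
    have hs1 : t - 1 < 2*B := by omega
    obtain ⟨a1, b1, ha1, hb1, he1⟩ := hE _ (hy ⟨t-1, hs1⟩)
    have ha1b1 : a1 ≠ b1 := fun h => hb1 (h ▸ ha1)
    have hadjy : (strandGraph E ∅ (2*B) y).connectedComponentMk
        ((a1, Tm) : V × Fin (2*B+1)) =
        (strandGraph E ∅ (2*B) y).connectedComponentMk (b1, Tm) := by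
      apply ConnectedComponent.sound
      apply SimpleGraph.Adj.reachable
      apply (SimpleGraph.fromRel_adj (strandRel E ∅ (2*B) y) _ _).mpr
      refine ⟨fun h => ha1b1 (congrArg Prod.fst h),
        Or.inl ⟨⟨t-1, hs1⟩, Or.inr (Or.inl ⟨hy _, ?_, ?_, ha1b1, Or.inl ⟨?_, ?_⟩⟩)⟩⟩
      · rw [he1]; exact Finset.mem_insert_self _ _
      · rw [he1]; exact Finset.mem_insert.mpr (Or.inr (Finset.mem_singleton_self _))
      · apply Fin.val_injective
        rw [Fin.coe_castSucc]
        show (Tm : ℕ) = t - 1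
        omega
      · apply Fin.val_injective
        rw [Fin.coe_castSucc]
        show (Tm : ℕ) = t - 1
        omega
    have cry := cross_card_add_one_le (strandGraph E ∅ (2*B) y) Tm ha1b1 hadjy
    have crz := lower (fun s => if (s : ℕ) + 1 < t then y s else x s) hzE
    have cre := lower (fun s => if (s : ℕ) + 1 < t then x s else y s) heE
    have hNA : A.card ≤ Fintype.card V := Finset.card_le_univ A
    have hcompl : Aᶜ.card = Fintype.card V - A.card := Finset.card_compl A
    have h2A : 2 * A.card ≤ Fintype.card V := by omega
    have hsum : numLoops E ∅ (2*B) x + numLoops E ∅ (2*B) y ≤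
        numLoops E ∅ (2*B) (fun s => if (s : ℕ) + 1 < t then y s else x s) +
        numLoops E ∅ (2*B) (fun s => if (s : ℕ) + 1 < t then x s else y s) +
        (4 * A.card - 2) := by
      rw [dxx, dyy, dzz, dee]
      omega
    refine ⟨hsum, ?_⟩
    have hexp : numLoops E ∅ (2*B) x + numLoops E ∅ (2*B) y ≤
        (4 * A.card - 2) +
        (numLoops E ∅ (2*B) (fun s => if (s : ℕ) + 1 < t then y s else x s) +
         numLoops E ∅ (2*B) (fun s => if (s : ℕ) + 1 < t then x s else y s)) := by omega
    calc 2 ^ numLoops E ∅ (2*B) x * 2 ^ numLoops E ∅ (2*B) y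
        = 2 ^ (numLoops E ∅ (2*B) x + numLoops E ∅ (2*B) y) := (pow_add 2 _ _).symm
      _ ≤ 2 ^ ((4 * A.card - 2) +
            (numLoops E ∅ (2*B) (fun s => if (s : ℕ) + 1 < t then y s else x s) +
             numLoops E ∅ (2*B) (fun s => if (s : ℕ) + 1 < t then x s else y s))) :=
          Nat.pow_le_pow_right (by norm_num) hexp
      _ = _ := by rw [pow_add, pow_add]
end
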